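/- arXiv:2506.15570 — 6 statements merged into one kernel-verified Lean document; each statement's English description precedes it below -/
import Mathlib

section
/- If (μ, ℋ) is a balanced pair, then for every dyadic cube Q, m(Q) is comparable to min{μ(R) : R ∈ ch(Q)}, with implicit constants depending only on the dimension n and the balancing constants. -/
open MeasureTheory

lemma phi_sum_indicator {X ι : Type*} (s : Finset ι) (A : ι → Set X)
    (hd : (↑s : Set ι).Pairwise fun R S => Disjoint (A R) (A S))
    (f : ι → ℝ) (φ : ℝ → ℝ) (hφ0 : φ 0 = 0) (x : X) :
    φ (∑ R ∈ s, f R * (A R).indicator (fun _ => (1 : ℝ)) x)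
      = ∑ R ∈ s, φ (f R) * (A R).indicator (fun _ => (1 : ℝ)) x := by
  by_cases hx : ∃ R₀ ∈ s, x ∈ A R₀
  · obtain ⟨R₀, hR₀s, hxR₀⟩ := hx
    have key : ∀ g : ι → ℝ,
        ∑ R ∈ s, g R * (A R).indicator (fun _ => (1 : ℝ)) x = g R₀ := by
      intro g
      rw [Finset.sum_eq_single_of_mem R₀ hR₀s]
      · simp [Set.indicator_of_mem hxR₀]
      · intro R hRs hne
        have hdisj := hd (Finset.mem_coe.2 hRs) (Finset.mem_coe.2 hR₀s) hne
        have : x ∉ A R := fun hxa => (Set.disjoint_left.1 hdisj) hxa hxR₀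
        simp [Set.indicator_of_notMem this]
    rw [key f, key (fun R => φ (f R))]
  · push_neg at hx
    have key : ∀ g : ι → ℝ,
        ∑ R ∈ s, g R * (A R).indicator (fun _ => (1 : ℝ)) x = 0 := by
      intro g
      refine Finset.sum_eq_zero fun R hR => ?_
      simp [Set.indicator_of_notMem (hx R hR)]
    rw [key f, key (fun R => φ (f R)), hφ0]

lemma integral_sum_indicator {X ι : Type*} [MeasurableSpace X] (μ : Measure X)
    (s : Finset ι) (A : ι → Set X) (hA : ∀ R, MeasurableSet (A R))
    (hfin : ∀ R, μ (A R) < ⊤) (f : ι → ℝ) :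
    ∫ x, ∑ R ∈ s, f R * (A R).indicator (fun _ => (1 : ℝ)) x ∂μ
      = ∑ R ∈ s, f R * (μ (A R)).toReal := by
  have hint : ∀ R ∈ s, Integrable
      (fun x => f R * (A R).indicator (fun _ => (1 : ℝ)) x) μ := by
    intro R _
    refine Integrable.const_mul ?_ _
    rw [integrable_indicator_iff (hA R)]
    exact integrableOn_const (hfin R).ne
  rw [integral_finset_sum s hint]
  refine Finset.sum_congr rfl fun R _ => ?_
  rw [integral_const_mul, integral_indicator_const (1 : ℝ) (hA R)]
  simp [mul_comm, Measure.real]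

/-- If `(μ, ℋ)` is a balanced pair, then for every dyadic cube `Q`,
`m(Q) ∼ min{μ(R) : R ∈ ch(Q)}`, with implicit constants depending only on the data
(dimension `n` and the standard/balancing constants). -/
theorem stmt3 {n : ℕ} (μ : Measure (EuclideanSpace ℝ (Fin n)))
    {ι : Type*} (cube : ι → Set (EuclideanSpace ℝ (Fin n)))
    (parent : ι → ι) (children : ι → Finset ι)
    (h : ι → EuclideanSpace ℝ (Fin n) → ℝ) (α : ι → ι → ℝ)
    (m : ι → ℝ) (hm : ∀ i, m i = (∫ x, |h i x| ∂μ) ^ 2)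
    (hmeas : ∀ i, MeasurableSet (cube i))
    (hpos : ∀ i, 0 < μ (cube i)) (hfin : ∀ i, μ (cube i) < ⊤)
    (hchne : ∀ i, (children i).Nonempty)
    (hchcard : ∀ i, (children i).card ≤ 2 ^ n)
    (hchsub : ∀ i, ∀ R ∈ children i, cube R ⊆ cube i)
    (hchdisj : ∀ i, (↑(children i) : Set ι).Pairwise fun R S => Disjoint (cube R) (cube S))
    (hchparent : ∀ i, ∀ R ∈ children i, parent R = i)
    (hchmem : ∀ i, i ∈ children (parent i))
    (hrep : ∀ i x, h i x = ∑ R ∈ children i, α i R * (cube R).indicator (fun _ => (1 : ℝ)) x)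
    (hmean : ∀ i, ∫ x, h i x ∂μ = 0)
    (hL2 : ∀ i, ∫ x, (h i x) ^ 2 ∂μ = 1)
    (Linf : ι → ℝ)
    (hbd : ∀ i x, |h i x| ≤ Linf i)
    (Ξ : ℝ)
    (hstd : ∀ i, (∫ x, |h i x| ∂μ) * Linf i ≤ Ξ)
    (cb Cb : ℝ) (hcb : 0 < cb) (hCb : 0 < Cb)
    (hbal : ∀ i, cb * m (parent i) ≤ m i ∧ m i ≤ Cb * m (parent i)) :
    ∃ c C : ℝ, 0 < c ∧ 0 < C ∧ ∀ i,
      c * (children i).inf' (hchne i) (fun R => (μ (cube R)).toReal) ≤ m i ∧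
      m i ≤ C * (children i).inf' (hchne i) (fun R => (μ (cube R)).toReal) := by
  set t : ι → ℝ := fun R => (μ (cube R)).toReal with ht
  have htnn : ∀ R, 0 ≤ t R := fun R => ENNReal.toReal_nonneg
  -- integral of |h i|
  have habs : ∀ i, ∫ x, |h i x| ∂μ = ∑ R ∈ children i, |α i R| * t R := by
    intro i
    have : (fun x => |h i x|)
        = fun x => ∑ R ∈ children i, |α i R| * (cube R).indicator (fun _ => (1 : ℝ)) x := by
      funext x
      rw [hrep i x]
      exact phi_sum_indicator _ _ (hchdisj i) _ (fun y => |y|) abs_zero x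
    rw [this, integral_sum_indicator μ _ _ (fun R => hmeas R) (fun R => hfin R)]
  -- integral of (h i)^2
  have hsq : ∀ i, ∑ R ∈ children i, (α i R) ^ 2 * t R = 1 := by
    intro i
    rw [← hL2 i]
    have : (fun x => (h i x) ^ 2)
        = fun x => ∑ R ∈ children i, (α i R) ^ 2 * (cube R).indicator (fun _ => (1 : ℝ)) x := by
      funext x
      rw [hrep i x]
      exact phi_sum_indicator _ _ (hchdisj i) _ (fun y => y ^ 2) (by norm_num) x
    rw [this, integral_sum_indicator μ _ _ (fun R => hmeas R) (fun R => hfin R)]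
  -- m i as square of the sum
  have hmi : ∀ i, m i = (∑ R ∈ children i, |α i R| * t R) ^ 2 := by
    intro i; rw [hm i, habs i]
  -- Cauchy-Schwarz: m i ≤ t i for every i
  have hmle : ∀ i, m i ≤ t i := by
    intro i
    rw [hmi i]
    have hcs := Finset.sum_mul_sq_le_sq_mul_sq (children i)
      (fun R => |α i R| * Real.sqrt (t R)) (fun R => Real.sqrt (t R))
    have h1 : ∀ R ∈ children i,
        (|α i R| * Real.sqrt (t R)) * Real.sqrt (t R) = |α i R| * t R := by
      intro R _
      rw [mul_assoc, Real.mul_self_sqrt (htnn R)]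
    have h2 : ∀ R ∈ children i,
        (|α i R| * Real.sqrt (t R)) ^ 2 = (α i R) ^ 2 * t R := by
      intro R _
      rw [mul_pow, sq_abs, Real.sq_sqrt (htnn R)]
    have h3 : ∀ R ∈ children i, (Real.sqrt (t R)) ^ 2 = t R := fun R _ =>
      Real.sq_sqrt (htnn R)
    rw [Finset.sum_congr rfl h1, Finset.sum_congr rfl h2, Finset.sum_congr rfl h3,
      hsq i, one_mul] at hcs
    refine hcs.trans ?_
    -- ∑ t R ≤ t i
    have hdisj' : (↑(children i) : Set ι).PairwiseDisjoint cube := hchdisj i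
    have hmeasU := measure_biUnion_finset (μ := μ) hdisj' (fun R _ => hmeas R)
    have hUsub : (⋃ R ∈ children i, cube R) ⊆ cube i :=
      Set.iUnion₂_subset fun R hR => hchsub i R hR
    have hsum_le : ∑ R ∈ children i, μ (cube R) ≤ μ (cube i) := by
      rw [← hmeasU]; exact measure_mono hUsub
    calc ∑ R ∈ children i, t R
        = (∑ R ∈ children i, μ (cube R)).toReal := by
          rw [ENNReal.toReal_sum fun R _ => (hfin R).ne]
      _ ≤ t i := (ENNReal.toReal_le_toReal
          (lt_of_le_of_lt hsum_le (hfin i)).ne (hfin i).ne).2 hsum_le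
  refine ⟨((2 : ℝ) ^ n)⁻¹, cb⁻¹, by positivity, by positivity, fun i => ?_⟩
  constructor
  · -- lower bound
    -- find a child with large α² t
    have hcard : (0 : ℝ) < (children i).card := by
      exact_mod_cast (hchne i).card_pos
    obtain ⟨R₁, hR₁, hR₁big⟩ :
        ∃ R ∈ children i, ((children i).card : ℝ)⁻¹ ≤ (α i R) ^ 2 * t R := by
      refine Finset.exists_le_of_sum_le (hchne i) ?_
      rw [Finset.sum_const, hsq i, nsmul_eq_mul, mul_inv_cancel₀ hcard.ne']
    have hinvle : ((2 : ℝ) ^ n)⁻¹ ≤ ((children i).card : ℝ)⁻¹ := by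
      apply inv_anti₀ hcard
      exact_mod_cast hchcard i
    have step1 : ((2 : ℝ) ^ n)⁻¹ * (children i).inf' (hchne i) t
        ≤ ((2 : ℝ) ^ n)⁻¹ * t R₁ :=
      mul_le_mul_of_nonneg_left (Finset.inf'_le t hR₁) (by positivity)
    have step2 : ((2 : ℝ) ^ n)⁻¹ * t R₁ ≤ ((α i R₁) ^ 2 * t R₁) * t R₁ :=
      mul_le_mul_of_nonneg_right (hinvle.trans hR₁big) (htnn R₁)
    have step3 : ((α i R₁) ^ 2 * t R₁) * t R₁ = (|α i R₁| * t R₁) ^ 2 := by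
      rw [mul_pow, sq_abs]; ring
    have step4 : (|α i R₁| * t R₁) ^ 2 ≤ (∑ R ∈ children i, |α i R| * t R) ^ 2 := by
      apply pow_le_pow_left₀ (by positivity)
      exact Finset.single_le_sum (fun R _ => mul_nonneg (abs_nonneg _) (htnn R)) hR₁
    rw [hmi i]
    calc ((2 : ℝ) ^ n)⁻¹ * (children i).inf' (hchne i) t
        ≤ ((2 : ℝ) ^ n)⁻¹ * t R₁ := step1
      _ ≤ ((α i R₁) ^ 2 * t R₁) * t R₁ := step2
      _ = (|α i R₁| * t R₁) ^ 2 := step3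
      _ ≤ _ := step4
  · -- upper bound
    obtain ⟨S₀, hS₀, hS₀inf⟩ := Finset.exists_mem_eq_inf' (hchne i) t
    have hpar : parent S₀ = i := hchparent i S₀ hS₀
    have hb := (hbal S₀).1
    rw [hpar] at hb
    have : cb * m i ≤ t S₀ := hb.trans (hmle S₀)
    rw [hS₀inf]
    calc m i = cb⁻¹ * (cb * m i) := by field_simp
      _ ≤ cb⁻¹ * t S₀ := mul_le_mul_of_nonneg_left this (by positivity)
end

section
/- A pair (μ, ℋ) is balanced if and only if both Ξ[ℋ,1,0] := sup{‖h_J‖_{L^∞}‖h_Q‖_{L¹} : J a child of Q} and Ξ[ℋ,0,1] := sup{‖h_Q‖_{L^∞}‖h_K‖_{L¹} : K a child of Q} are finite. -/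
open MeasureTheory ENNReal

/-- Hölder-type fact: if `∫ f² = 1` then `1 ≤ ‖f‖₁ ‖f‖_∞`. -/
lemma aux_one_le {α : Type*} [MeasurableSpace α] {μ : Measure α} {f : α → ℝ}
    (hInt : Integrable f μ) (hL2 : ∫ x, (f x) ^ 2 ∂μ = 1)
    (htop : eLpNorm f ⊤ μ ≠ ⊤) :
    1 ≤ (∫ x, |f x| ∂μ) * (eLpNorm f ⊤ μ).toReal := by
  set b := (eLpNorm f ⊤ μ).toReal with hb
  have hae : ∀ᵐ x ∂μ, |f x| ≤ b := by
    have h1 : ∀ᵐ x ∂μ, (‖f x‖₊ : ℝ≥0∞) ≤ eLpNormEssSup f μ := ae_le_eLpNormEssSup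
    filter_upwards [h1] with x hx
    have h2 : eLpNormEssSup f μ = eLpNorm f ⊤ μ := (eLpNorm_exponent_top).symm
    rw [h2] at hx
    have := ENNReal.toReal_mono htop hx
    simpa [Real.norm_eq_abs, hb] using this
  have hg : Integrable (fun x => b * |f x|) μ := hInt.abs.const_mul b
  have hsq : Integrable (fun x => (f x) ^ 2) μ := by
    refine hg.mono' ?_ ?_
    · have := hInt.aestronglyMeasurable.mul hInt.aestronglyMeasurable
      exact this.congr (Filter.Eventually.of_forall fun x => by simp [pow_two])
    · filter_upwards [hae] with x hx
      have h3 : ‖(f x) ^ 2‖ = |f x| * |f x| := by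
        rw [Real.norm_eq_abs, pow_two, abs_mul]
      rw [h3]
      exact mul_le_mul_of_nonneg_right hx (abs_nonneg _)
  have hle : ∫ x, (f x) ^ 2 ∂μ ≤ ∫ x, b * |f x| ∂μ := by
    refine integral_mono_ae hsq hg ?_
    filter_upwards [hae] with x hx
    have h4 : (f x) ^ 2 = |f x| * |f x| := by
      rw [pow_two, ← abs_mul_abs_self]
    rw [h4]
    exact mul_le_mul_of_nonneg_right hx (abs_nonneg _)
  rw [hL2, integral_const_mul] at hle
  linarith

/-- Pure algebraic core of the equivalence. -/
lemma alg_iff {ι : Type*} (parent : ι → ι) (children : ι → Finset ι)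
    (a b : ι → ℝ) (ha0 : ∀ i, 0 ≤ a i) (hb0 : ∀ i, 0 ≤ b i)
    (hone : ∀ i, 1 ≤ a i * b i)
    (hchparent : ∀ i, ∀ R ∈ children i, parent R = i)
    (hchmem : ∀ i, i ∈ children (parent i)) :
    ((∃ Ξ : ℝ, ∀ i, a i * b i ≤ Ξ) ∧
      (∃ cb Cb : ℝ, 0 < cb ∧ 0 < Cb ∧ ∀ i,
        cb * a (parent i) ^ 2 ≤ a i ^ 2 ∧ a i ^ 2 ≤ Cb * a (parent i) ^ 2))
    ↔ ((∃ B : ℝ, ∀ Q, ∀ J ∈ children Q, b J * a Q ≤ B) ∧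
       (∃ B : ℝ, ∀ Q, ∀ K ∈ children Q, b Q * a K ≤ B)) := by
  constructor
  · rintro ⟨⟨Ξ, hΞ⟩, cb, Cb, hcb, hCb, hbal⟩
    constructor
    · refine ⟨Ξ / Real.sqrt cb, fun Q J hJ => ?_⟩
      have hpJ : parent J = Q := hchparent Q J hJ
      have h1 : cb * a Q ^ 2 ≤ a J ^ 2 := by
        have := (hbal J).1; rwa [hpJ] at this
      have hs : 0 < Real.sqrt cb := Real.sqrt_pos.mpr hcb
      have hx2 : (Real.sqrt cb * a Q) ^ 2 ≤ a J ^ 2 := by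
        rw [mul_pow, Real.sq_sqrt hcb.le]; exact h1
      have h2 : Real.sqrt cb * a Q ≤ a J := by
        calc Real.sqrt cb * a Q
            = Real.sqrt ((Real.sqrt cb * a Q) ^ 2) :=
              (Real.sqrt_sq (mul_nonneg (Real.sqrt_nonneg cb) (ha0 Q))).symm
          _ ≤ Real.sqrt (a J ^ 2) := Real.sqrt_le_sqrt hx2
          _ = a J := Real.sqrt_sq (ha0 J)
      rw [le_div_iff₀ hs]
      have h3 : b J * (Real.sqrt cb * a Q) ≤ b J * a J :=
        mul_le_mul_of_nonneg_left h2 (hb0 J)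
      have h4 := hΞ J
      nlinarith [h3, h4]
    · refine ⟨Ξ * Real.sqrt Cb, fun Q K hK => ?_⟩
      have hpK : parent K = Q := hchparent Q K hK
      have h1 : a K ^ 2 ≤ Cb * a Q ^ 2 := by
        have := (hbal K).2; rwa [hpK] at this
      have hx2 : a K ^ 2 ≤ (Real.sqrt Cb * a Q) ^ 2 := by
        rw [mul_pow, Real.sq_sqrt hCb.le]; exact h1
      have h2 : a K ≤ Real.sqrt Cb * a Q := by
        calc a K = Real.sqrt (a K ^ 2) := (Real.sqrt_sq (ha0 K)).symm
          _ ≤ Real.sqrt ((Real.sqrt Cb * a Q) ^ 2) := Real.sqrt_le_sqrt hx2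
          _ = Real.sqrt Cb * a Q := Real.sqrt_sq (mul_nonneg (Real.sqrt_nonneg Cb) (ha0 Q))
      have h3 : b Q * a K ≤ b Q * (Real.sqrt Cb * a Q) :=
        mul_le_mul_of_nonneg_left h2 (hb0 Q)
      have h4 : Real.sqrt Cb * (a Q * b Q) ≤ Real.sqrt Cb * Ξ :=
        mul_le_mul_of_nonneg_left (hΞ Q) (Real.sqrt_nonneg Cb)
      nlinarith [h3, h4]
  · rintro ⟨⟨B1, hB1⟩, ⟨B2, hB2⟩⟩
    set C1 := max B1 1 with hC1def
    set C2 := max B2 1 with hC2def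
    have hC1 : (0 : ℝ) < C1 := lt_of_lt_of_le one_pos (le_max_right _ _)
    have hC2 : (0 : ℝ) < C2 := lt_of_lt_of_le one_pos (le_max_right _ _)
    have hb1 : ∀ i, b i * a (parent i) ≤ C1 := fun i =>
      (hB1 (parent i) i (hchmem i)).trans (le_max_left _ _)
    have hb2 : ∀ i, b (parent i) * a i ≤ C2 := fun i =>
      (hB2 (parent i) i (hchmem i)).trans (le_max_left _ _)
    refine ⟨⟨C1 * C2, fun i => ?_⟩, (C1 ^ 2)⁻¹, C2 ^ 2, by positivity, by positivity,
      fun i => ⟨?_, ?_⟩⟩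
    · have h1 : (b i * a (parent i)) * (b (parent i) * a i) ≤ C1 * C2 :=
        mul_le_mul (hb1 i) (hb2 i) (mul_nonneg (hb0 _) (ha0 _)) hC1.le
      have h3 : a i * b i * 1 ≤ a i * b i * (a (parent i) * b (parent i)) :=
        mul_le_mul_of_nonneg_left (hone (parent i)) (mul_nonneg (ha0 i) (hb0 i))
      nlinarith [h1, h3]
    · have hpa : a (parent i) ≤ C1 * a i := by
        have h3 : a (parent i) * 1 ≤ a (parent i) * (a i * b i) :=
          mul_le_mul_of_nonneg_left (hone i) (ha0 _)
        have h4 : a i * (b i * a (parent i)) ≤ a i * C1 :=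
          mul_le_mul_of_nonneg_left (hb1 i) (ha0 i)
        nlinarith [h3, h4]
      rw [inv_mul_le_iff₀ (by positivity)]
      calc a (parent i) ^ 2 ≤ (C1 * a i) ^ 2 := pow_le_pow_left₀ (ha0 _) hpa 2
        _ = C1 ^ 2 * a i ^ 2 := by ring
    · have hpa : a i ≤ C2 * a (parent i) := by
        have h3 : a i * 1 ≤ a i * (a (parent i) * b (parent i)) :=
          mul_le_mul_of_nonneg_left (hone (parent i)) (ha0 i)
        have h4 : a (parent i) * (b (parent i) * a i) ≤ a (parent i) * C2 :=
          mul_le_mul_of_nonneg_left (hb2 i) (ha0 _)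
        nlinarith [h3, h4]
      calc a i ^ 2 ≤ (C2 * a (parent i)) ^ 2 := pow_le_pow_left₀ (ha0 i) hpa 2
        _ = C2 ^ 2 * a (parent i) ^ 2 := by ring

/-- A pair `(μ, ℋ)` is balanced (standard system plus `m(Q) ∼ m(Q̂)`) if and only if both
`Ξ[ℋ,1,0] = sup{‖h_J‖_∞ ‖h_Q‖₁ : J ∈ ch(Q)}` and
`Ξ[ℋ,0,1] = sup{‖h_Q‖_∞ ‖h_K‖₁ : K ∈ ch(Q)}` are finite.
Here `m(Q) = ‖h_Q‖_{L¹(μ)}²` and `‖h_Q‖_∞` is the `L^∞(μ)` norm. -/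
theorem stmt4 {n : ℕ} (μ : Measure (EuclideanSpace ℝ (Fin n)))
    {ι : Type*} (cube : ι → Set (EuclideanSpace ℝ (Fin n)))
    (parent : ι → ι) (children : ι → Finset ι)
    (h : ι → EuclideanSpace ℝ (Fin n) → ℝ)
    (hmeas : ∀ i, MeasurableSet (cube i))
    (hpos : ∀ i, 0 < μ (cube i)) (hfin : ∀ i, μ (cube i) < ⊤)
    (hsupp : ∀ i, ∀ x ∉ cube i, h i x = 0)
    (hmean : ∀ i, ∫ x, h i x ∂μ = 0)
    (hL2 : ∀ i, ∫ x, (h i x) ^ 2 ∂μ = 1)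
    (hInt : ∀ i, Integrable (h i) μ)
    (hLinf_ne_top : ∀ i, eLpNorm (h i) ⊤ μ ≠ ⊤)
    (hchparent : ∀ i, ∀ R ∈ children i, parent R = i)
    (hchmem : ∀ i, i ∈ children (parent i)) :
    (((∃ Ξ : ℝ, ∀ i, (∫ x, |h i x| ∂μ) * (eLpNorm (h i) ⊤ μ).toReal ≤ Ξ) ∧
      (∃ cb Cb : ℝ, 0 < cb ∧ 0 < Cb ∧ ∀ i,
        cb * (∫ x, |h (parent i) x| ∂μ) ^ 2 ≤ (∫ x, |h i x| ∂μ) ^ 2 ∧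
        (∫ x, |h i x| ∂μ) ^ 2 ≤ Cb * (∫ x, |h (parent i) x| ∂μ) ^ 2)))
    ↔
    ((∃ B : ℝ, ∀ Q, ∀ J ∈ children Q,
        (eLpNorm (h J) ⊤ μ).toReal * (∫ x, |h Q x| ∂μ) ≤ B) ∧
      (∃ B : ℝ, ∀ Q, ∀ K ∈ children Q,
        (eLpNorm (h Q) ⊤ μ).toReal * (∫ x, |h K x| ∂μ) ≤ B)) := by
  exact alg_iff parent children
    (fun i => ∫ x, |h i x| ∂μ) (fun i => (eLpNorm (h i) ⊤ μ).toReal)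
    (fun i => integral_nonneg fun x => abs_nonneg _)
    (fun i => ENNReal.toReal_nonneg)
    (fun i => aux_one_le (hInt i) (hL2 i) (hLinf_ne_top i))
    hchparent hchmem
end

section
/- Let f: ℝⁿ → ℝᵈ be integrable on a cube Q, let ℰ = {Σⱼ xⱼαⱼeⱼ : Σⱼ xⱼ² ≤ 1} be the John ellipsoid of the convex body average ⟪f⟫_Q (so that ℰ ⊂ ⟪f⟫_Q ⊂ √d·ℰ), with orthonormal basis {eⱼ} and semi-axes αⱼ ≥ 0. If v ∈ ℝᵈ satisfies |v·eⱼ| ≤ A·⟨|f·eⱼ|⟩_Q for all j, then v ∈ A·d·⟪f⟫_Q. -/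
open MeasureTheory Pointwise RealInnerProductSpace

/-- John ellipsoid lemma for convex body averages: if `ℰ ⊂ ⟪f⟫_Q ⊂ √d·ℰ` with `ℰ` the
ellipsoid with orthonormal axes `{e j}` and semi-axes `α j ≥ 0`, and if `v` satisfies
`|v·e j| ≤ A ⟨|f·e j|⟩_Q` for all `j`, then `v ∈ A·d·⟪f⟫_Q`. -/
theorem stmt6 {n d : ℕ} (μ : Measure (EuclideanSpace ℝ (Fin n)))
    (Q : Set (EuclideanSpace ℝ (Fin n))) (hQM : MeasurableSet Q)
    (hQpos : 0 < μ Q) (hQfin : μ Q < ⊤)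
    (f : EuclideanSpace ℝ (Fin n) → EuclideanSpace ℝ (Fin d))
    (hf : IntegrableOn f Q μ)
    (e : Fin d → EuclideanSpace ℝ (Fin d)) (he : Orthonormal ℝ e)
    (α : Fin d → ℝ) (hα : ∀ j, 0 ≤ α j)
    (K : Set (EuclideanSpace ℝ (Fin d)))
    (hK : K = {v | ∃ ψ : EuclideanSpace ℝ (Fin n) → ℝ, Measurable ψ ∧ (∀ x, |ψ x| ≤ 1) ∧
      v = (μ Q).toReal⁻¹ • ∫ x in Q, ψ x • f x ∂μ})
    (E : Set (EuclideanSpace ℝ (Fin d)))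
    (hE : E = {v | ∃ c : Fin d → ℝ, (∑ j, (c j) ^ 2) ≤ 1 ∧ v = ∑ j, (c j * α j) • e j})
    (hEK : E ⊆ K) (hKE : K ⊆ Real.sqrt d • E)
    (v : EuclideanSpace ℝ (Fin d)) (A : ℝ) (hA : 0 ≤ A)
    (hv : ∀ j, |⟪v, e j⟫| ≤ A * ((μ Q).toReal⁻¹ * ∫ x in Q, |⟪f x, e j⟫| ∂μ)) :
    v ∈ (A * d) • K := by
  classical
  have hK0 : (0 : EuclideanSpace ℝ (Fin d)) ∈ K := by
    rw [hK]
    exact ⟨0, measurable_const, fun x => by norm_num, by simp⟩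
  by_cases hd : d = 0
  · subst hd
    have hv0 : v = 0 := PiLp.ext fun i => i.elim0
    exact Set.mem_smul_set.2 ⟨0, hK0, by simp [hv0]⟩
  have hdpos : 0 < d := Nat.pos_of_ne_zero hd
  have : Nonempty (Fin d) := ⟨⟨0, hdpos⟩⟩
  let b : Module.Basis (Fin d) ℝ (EuclideanSpace ℝ (Fin d)) :=
    basisOfOrthonormalOfCardEqFinrank he (by simp)
  have hb : ⇑b = e := coe_basisOfOrthonormalOfCardEqFinrank he _
  have hob : Orthonormal ℝ ⇑b := by rw [hb]; exact he
  let ob : OrthonormalBasis (Fin d) ℝ (EuclideanSpace ℝ (Fin d)) := b.toOrthonormalBasis hob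
  have hob' : ⇑ob = e := (b.coe_toOrthonormalBasis hob).trans hb
  have hvrepr : ∑ j, ⟪e j, v⟫ • e j = v := by
    have h := ob.sum_repr' v
    rwa [hob'] at h
  -- Step 1: the averages of |⟪f x, e j⟫| are bounded by √d * α j
  have key : ∀ j, (μ Q).toReal⁻¹ * ∫ x in Q, |⟪f x, e j⟫| ∂μ ≤ Real.sqrt d * α j := by
    intro j
    set g := hf.1.mk f with hg
    have hgm : Measurable g := hf.1.stronglyMeasurable_mk.measurable
    have hfg : f =ᵐ[μ.restrict Q] g := hf.1.ae_eq_mk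
    set ψ : EuclideanSpace ℝ (Fin n) → ℝ :=
      fun x => if ⟪g x, e j⟫ < 0 then -1 else 1 with hψdef
    have hψm : Measurable ψ := by
      refine Measurable.ite ?_ measurable_const measurable_const
      exact measurableSet_lt (hgm.inner measurable_const) measurable_const
    have hψ1 : ∀ x, |ψ x| ≤ 1 := by
      intro x
      simp only [ψ]
      split <;> norm_num
    have hint : Integrable (fun x => ψ x • f x) (μ.restrict Q) := by
      refine Integrable.mono' hf.norm (hψm.aestronglyMeasurable.smul hf.1) ?_
      filter_upwards with x
      rw [norm_smul]
      calc ‖ψ x‖ * ‖f x‖ ≤ 1 * ‖f x‖ :=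
            mul_le_mul_of_nonneg_right (hψ1 x) (norm_nonneg _)
        _ = ‖f x‖ := one_mul _
    have hwK : (μ Q).toReal⁻¹ • (∫ x in Q, ψ x • f x ∂μ) ∈ K := by
      rw [hK]; exact ⟨ψ, hψm, hψ1, rfl⟩
    obtain ⟨u, huE, huw⟩ := Set.mem_smul_set.1 (hKE hwK)
    rw [hE] at huE
    obtain ⟨c, hc1, hcu⟩ := huE
    have hinner : ⟪(μ Q).toReal⁻¹ • (∫ x in Q, ψ x • f x ∂μ), e j⟫
        = (μ Q).toReal⁻¹ * ∫ x in Q, |⟪f x, e j⟫| ∂μ := by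
      rw [real_inner_smul_left]
      congr 1
      rw [real_inner_comm, ← integral_inner hint]
      refine integral_congr_ae ?_
      filter_upwards [hfg] with x hx
      rw [hx, real_inner_smul_right, real_inner_comm]
      simp only [ψ]
      split
      · next ht => rw [abs_of_neg ht]; ring
      · next ht => rw [abs_of_nonneg (not_lt.1 ht)]; ring
    have h2 : (μ Q).toReal⁻¹ * ∫ x in Q, |⟪f x, e j⟫| ∂μ = Real.sqrt d * (c j * α j) := by
      rw [← hinner, ← huw, hcu, real_inner_smul_left, he.inner_left_fintype]
      simp
    have hcj : |c j| ≤ 1 := by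
      have h1 : (c j) ^ 2 ≤ 1 :=
        le_trans (Finset.single_le_sum (f := fun k => (c k) ^ 2)
          (fun k _ => sq_nonneg _) (Finset.mem_univ j)) hc1
      nlinarith [sq_abs (c j), abs_nonneg (c j)]
    rw [h2]
    have hc2 : c j ≤ 1 := (abs_le.1 hcj).2
    nlinarith [mul_nonneg (mul_nonneg (Real.sqrt_nonneg (d : ℝ)) (hα j))
      (sub_nonneg.2 hc2)]
  -- Step 2: coordinate bounds for v
  have hbound : ∀ j, |⟪v, e j⟫| ≤ A * Real.sqrt d * α j := by
    intro j
    calc |⟪v, e j⟫| ≤ A * ((μ Q).toReal⁻¹ * ∫ x in Q, |⟪f x, e j⟫| ∂μ) := hv j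
      _ ≤ A * (Real.sqrt d * α j) := mul_le_mul_of_nonneg_left (key j) hA
      _ = A * Real.sqrt d * α j := (mul_assoc _ _ _).symm
  by_cases hA0 : A = 0
  · have hv0 : v = 0 := by
      rw [← hvrepr]
      refine Finset.sum_eq_zero fun j _ => ?_
      have h := hbound j
      rw [hA0, zero_mul, zero_mul] at h
      have h0 : ⟪v, e j⟫ = 0 := abs_nonpos_iff.1 h
      rw [real_inner_comm, h0, zero_smul]
    exact Set.mem_smul_set.2 ⟨0, hK0, by simp [hA0, hv0]⟩
  have hsq : (0 : ℝ) < Real.sqrt d := Real.sqrt_pos.2 (by exact_mod_cast hdpos)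
  have hd2 : Real.sqrt d * Real.sqrt d = (d : ℝ) := Real.mul_self_sqrt (Nat.cast_nonneg d)
  set c : Fin d → ℝ := fun j => if α j = 0 then 0 else ⟪v, e j⟫ / (A * Real.sqrt d * α j)
    with hcdef
  have hcle : ∀ j, |c j| ≤ 1 := by
    intro j
    by_cases h : α j = 0
    · simp [c, h]
    · have hαpos : 0 < α j := lt_of_le_of_ne (hα j) (Ne.symm h)
      have hApos : 0 < A := lt_of_le_of_ne hA (Ne.symm hA0)
      simp only [c, if_neg h]
      rw [abs_div, div_le_one (by positivity)]
      calc |⟪v, e j⟫| ≤ A * Real.sqrt d * α j := hbound j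
        _ = |A * Real.sqrt d * α j| := (abs_of_pos (by positivity)).symm
  have hcoef : ∀ j, (A * d) * ((c j / Real.sqrt d) * α j) = ⟪v, e j⟫ := by
    intro j
    by_cases h : α j = 0
    · have hb0 := hbound j
      rw [h, mul_zero] at hb0
      have h0 : ⟪v, e j⟫ = 0 := abs_nonpos_iff.1 hb0
      simp [c, h, h0]
    · simp only [c, if_neg h]
      have hApos : 0 < A := lt_of_le_of_ne hA (Ne.symm hA0)
      set t := ⟪v, e j⟫ with ht
      generalize hs : Real.sqrt (d : ℝ) = s at hd2 hsq ⊢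
      rw [← hd2]
      field_simp [hApos.ne', hsq.ne', h]
  have huE : (∑ j, ((c j / Real.sqrt d) * α j) • e j) ∈ E := by
    rw [hE]
    refine ⟨fun j => c j / Real.sqrt d, ?_, rfl⟩
    have hdR : (0 : ℝ) < (d : ℝ) := by exact_mod_cast hdpos
    calc ∑ j, (c j / Real.sqrt d) ^ 2 ≤ ∑ _j : Fin d, (1 : ℝ) / d := by
          refine Finset.sum_le_sum fun j _ => ?_
          rw [div_pow, Real.sq_sqrt (Nat.cast_nonneg d)]
          gcongr
          nlinarith [hcle j, sq_abs (c j), abs_nonneg (c j)]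
      _ = 1 := by
          rw [Finset.sum_const, Finset.card_univ, Fintype.card_fin, nsmul_eq_mul]
          field_simp
  refine Set.mem_smul_set.2 ⟨_, hEK huE, ?_⟩
  rw [← hvrepr, Finset.smul_sum]
  refine Finset.sum_congr rfl fun j _ => ?_
  rw [smul_smul, hcoef j, real_inner_comm]
end

section
/- Let T be a scalar linear operator of weak type (1,1) with respect to a Radon measure μ, and f ∈ L¹(ℝⁿ; ℝᵈ) supported in a cube Q₀ with μ(Q₀) > 0. Then for any λ > 0, μ({x ∈ Q₀ : Tf(x) ∉ λ⟪f⟫_{Q₀}}) ≤ (d²/λ)·‖T‖_{L¹→L^{1,∞}}·μ(Q₀), where T acts componentwise on f. -/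
open MeasureTheory Pointwise ENNReal NNReal

section LemB
open Matrix
lemma lemB {m : ℕ} (S : Set (Fin m → ℝ)) (R : ℝ)
    (hbdd : ∀ w ∈ S, ∀ i, |w i| ≤ R)
    (hspan : Submodule.span ℝ S = ⊤) (ε : ℝ) (hε : 0 < ε) :
    ∃ (v u : Fin m → (Fin m → ℝ)), (∀ j, v j ∈ S) ∧
      (∀ j, ∀ w ∈ S, |u j ⬝ᵥ w| ≤ 1 + ε) ∧
      (∀ w : Fin m → ℝ, w = ∑ j, (u j ⬝ᵥ w) • v j) := by
  classical
  set Rm := max R 0 with hRm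
  set D : (Fin m → Fin m → ℝ) → ℝ := fun v => |(Matrix.of fun i j => v j i).det| with hD
  set TS : Set (Fin m → Fin m → ℝ) := {v | ∀ j, v j ∈ S} with hTS
  -- upper bound on determinants
  have hub : ∀ v ∈ TS, D v ≤ (Fintype.card (Equiv.Perm (Fin m))) * Rm ^ m := by
    intro v hv
    have : D v ≤ ∑ σ : Equiv.Perm (Fin m), Rm ^ m := by
      rw [hD]
      simp only [Matrix.det_apply']
      refine (Finset.abs_sum_le_sum_abs _ _).trans (Finset.sum_le_sum ?_)
      intro σ _
      rw [abs_mul]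
      have h1 : |((Equiv.Perm.sign σ : ℤ) : ℝ)| = 1 := by
        rcases Int.units_eq_one_or (Equiv.Perm.sign σ) with h | h <;> simp [h]
      rw [h1, one_mul]
      rw [Finset.abs_prod]
      have := Finset.prod_le_prod (s := Finset.univ)
        (f := fun i => |(Matrix.of fun i j => v j i) (σ i) i|) (g := fun _ => Rm)
        (fun i _ => abs_nonneg _)
        (fun i _ => le_trans (hbdd _ (hv i) (σ i)) (le_max_left _ _))
      simpa using this
    simpa using this
  have hbdda : BddAbove (D '' TS) := by
    refine ⟨(Fintype.card (Equiv.Perm (Fin m))) * Rm ^ m, ?_⟩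
    rintro x ⟨v, hv, rfl⟩; exact hub v hv
  -- a basis from S
  obtain ⟨b, hbS, hbspan, hbli⟩ := exists_linearIndependent ℝ S
  rw [hspan] at hbspan
  have hfin : b.Finite := hbli.setFinite
  haveI : Fintype b := hfin.fintype
  let B : Module.Basis b ℝ (Fin m → ℝ) := Module.Basis.mk hbli (by rw [← hbspan]; exact le_of_eq (by rw [Subtype.range_coe]))
  have hcard : Fintype.card b = m := by
    have := Module.finrank_eq_card_basis B
    simpa [Module.finrank_fin_fun] using this.symm
  let e : Fin m ≃ b := (Fintype.equivFinOfCardEq hcard).symm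
  let v₀ : Fin m → (Fin m → ℝ) := fun j => (e j : Fin m → ℝ)
  have hv₀S : v₀ ∈ TS := fun j => hbS (e j).2
  have hv₀det : D v₀ ≠ 0 := by
    have hB : ∀ j, (B.reindex e.symm) j = v₀ j := by
      intro j; simp [B, v₀, Module.Basis.mk_apply]
    have : (Matrix.of fun i j => v₀ j i) = (Pi.basisFun ℝ (Fin m)).toMatrix (B.reindex e.symm) := by
      ext i j
      rw [Module.Basis.toMatrix_apply, Pi.basisFun_repr, hB]
      rfl
    rw [hD]
    simp only [this]
    haveI := Module.Basis.invertibleToMatrix (Pi.basisFun ℝ (Fin m)) (B.reindex e.symm)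
    have := Matrix.isUnit_iff_isUnit_det ((Pi.basisFun ℝ (Fin m)).toMatrix (B.reindex e.symm))
    have hu : IsUnit ((Pi.basisFun ℝ (Fin m)).toMatrix (B.reindex e.symm)).det :=
      this.mp (isUnit_of_invertible _)
    simpa [abs_eq_zero] using hu.ne_zero
  have hSdet_ne : (D '' TS).Nonempty := ⟨D v₀, v₀, hv₀S, rfl⟩
  set s := sSup (D '' TS) with hs
  have hs_pos : 0 < s := lt_of_lt_of_le (lt_of_le_of_ne (abs_nonneg _) (Ne.symm hv₀det))
    (le_csSup hbdda ⟨v₀, hv₀S, rfl⟩)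
  have h1ε : (0:ℝ) < 1 + ε := by linarith
  have hlt : s / (1 + ε) < s := by
    rw [div_lt_iff₀ h1ε]; nlinarith
  obtain ⟨x, ⟨v, hvS, rfl⟩, hxgt⟩ := exists_lt_of_lt_csSup hSdet_ne hlt
  have hDv_pos : 0 < D v := lt_of_le_of_lt (by positivity) hxgt
  set M : Matrix (Fin m) (Fin m) ℝ := Matrix.of fun i j => v j i with hM
  have hdet : M.det ≠ 0 := by
    intro h; rw [hD] at hDv_pos; rw [hM] at h
    simp [h] at hDv_pos
  refine ⟨v, fun j i => M⁻¹ j i, hvS, ?_, ?_⟩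
  · intro j w hw
    have hcram : (fun i => M⁻¹ j i) ⬝ᵥ w = M.det⁻¹ * (M.updateCol j w).det := by
      have h1 : (fun i => M⁻¹ j i) ⬝ᵥ w = M⁻¹.mulVec w j := rfl
      rw [h1, Matrix.inv_def, Matrix.smul_mulVec, ← Matrix.cramer_eq_adjugate_mulVec,
        Ring.inverse_eq_inv']
      simp [Matrix.cramer_apply]
    rw [hcram]
    have hupd : |(M.updateCol j w).det| ≤ s := by
      have : (M.updateCol j w) = Matrix.of fun i k => (Function.update v j w) k i := by
        ext i k
        rw [Matrix.updateCol_apply]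
        by_cases h : k = j <;> simp [h, Function.update, hM]
      refine le_csSup hbdda ⟨Function.update v j w, ?_, by rw [hD, this]⟩
      intro k
      by_cases h : k = j <;> simp [h, Function.update, hvS k, hw]
    have hDvs : s ≤ (1 + ε) * |M.det| := by
      rw [div_lt_iff₀ h1ε] at hxgt
      have : D v = |M.det| := rfl
      nlinarith [hxgt]
    rw [abs_mul, abs_inv]
    rw [inv_mul_le_iff₀ (by rw [hD] at hDv_pos; exact hDv_pos)]
    calc |(M.updateCol j w).det| ≤ s := hupd
      _ ≤ (1 + ε) * |M.det| := hDvs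
      _ = |M.det| * (1 + ε) := by ring
  · intro w
    have h1 : M.mulVec (M⁻¹.mulVec w) = w := by
      rw [Matrix.mulVec_mulVec, Matrix.mul_nonsing_inv _ (isUnit_iff_ne_zero.mpr hdet),
        Matrix.one_mulVec]
    funext i
    have h2 : (∑ j, ((fun i => M⁻¹ j i) ⬝ᵥ w) • v j) i = ∑ j, (M⁻¹.mulVec w j) * v j i := by
      simp [Finset.sum_apply]
      rfl
    rw [h2]
    conv_lhs => rw [← h1]
    rw [Matrix.mulVec]
    simp [dotProduct, hM, mul_comm]
end LemB

lemma lemT_sum {X : Type*} [MeasurableSpace X] (μ : Measure X)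
    (T : (X → ℝ) → (X → ℝ))
    (hTadd : ∀ g₁ g₂, Integrable g₁ μ → Integrable g₂ μ → T (g₁ + g₂) = T g₁ + T g₂)
    (hTsmul : ∀ (a : ℝ) g, Integrable g μ → T (a • g) = a • T g)
    {ι : Type*} [DecidableEq ι] (s : Finset ι) (c : ι → ℝ) (g : ι → X → ℝ)
    (hg : ∀ k, Integrable (g k) μ) :
    T (∑ k ∈ s, c k • g k) = ∑ k ∈ s, c k • T (g k) := by
  induction s using Finset.induction_on with
  | empty =>
    simp only [Finset.sum_empty]
    have h0 : ((0 : ℝ) • (0 : X → ℝ)) = 0 := by simp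
    have := hTsmul 0 0 (integrable_zero _ _ _)
    rw [h0] at this
    rw [this]; simp
  | @insert a s' hk ih =>
    rw [Finset.sum_insert hk, Finset.sum_insert hk]
    have h1 : Integrable (c a • g a) μ := (hg a).smul (c a)
    have h2 : Integrable (∑ k ∈ s', c k • g k) μ := by
      have := integrable_finset_sum (μ := μ) s' (fun k _ => (hg k).smul (c k))
      simpa [Finset.sum_fn] using this
    have := hTadd (c a • g a) (∑ k ∈ s', c k • g k) h1 h2
    rw [this, hTsmul _ _ (hg a), ih]

lemma lemA {n d : ℕ} (μ : Measure (EuclideanSpace ℝ (Fin n)))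
    (T : (EuclideanSpace ℝ (Fin n) → ℝ) → (EuclideanSpace ℝ (Fin n) → ℝ))
    (hTadd : ∀ g₁ g₂, Integrable g₁ μ → Integrable g₂ μ → T (g₁ + g₂) = T g₁ + T g₂)
    (hTsmul : ∀ (a : ℝ) g, Integrable g μ → T (a • g) = a • T g)
    (f : EuclideanSpace ℝ (Fin n) → EuclideanSpace ℝ (Fin d))
    (hfint : Integrable f μ)
    (φ : EuclideanSpace ℝ (Fin d) →ₗ[ℝ] ℝ) (x : EuclideanSpace ℝ (Fin n)) :
    T (fun y => φ (f y)) x =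
      φ ((WithLp.equiv 2 (Fin d → ℝ)).symm
        (fun j => T (fun y => (WithLp.equiv 2 (Fin d → ℝ)) (f y) j) x)) := by
  classical
  set g : Fin d → EuclideanSpace ℝ (Fin n) → ℝ :=
    fun k => fun y => (WithLp.equiv 2 (Fin d → ℝ)) (f y) k with hg
  have hgint : ∀ k, Integrable (g k) μ := by
    intro k
    refine Integrable.mono hfint.norm
      (((continuous_apply k).comp (PiLp.continuous_ofLp (p := 2) (β := fun _ : Fin d => ℝ))).comp_aestronglyMeasurable hfint.1) ?_
    filter_upwards with y
    have h1 : g k y = inner ℝ (EuclideanSpace.single k (1:ℝ)) (f y) := by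
      rw [EuclideanSpace.inner_single_left]
      simp [hg]
    rw [Real.norm_eq_abs, Real.norm_eq_abs]
    calc |g k y| = |inner ℝ (EuclideanSpace.single k (1:ℝ)) (f y)| := by rw [h1]
      _ ≤ ‖EuclideanSpace.single k (1:ℝ)‖ * ‖f y‖ := abs_real_inner_le_norm _ _
      _ ≤ 1 * ‖f y‖ := by
          gcongr
          simp [EuclideanSpace.norm_single]
      _ = |‖f y‖| := by rw [one_mul, abs_of_nonneg (norm_nonneg _)]
  have hexp : ∀ v : EuclideanSpace ℝ (Fin d),
      v = ∑ k, (WithLp.equiv 2 (Fin d → ℝ)) v k • EuclideanSpace.single k (1:ℝ) := by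
    intro v
    conv_lhs => rw [← (EuclideanSpace.basisFun (Fin d) ℝ).sum_repr v]
    refine Finset.sum_congr rfl (fun k _ => ?_)
    rw [EuclideanSpace.basisFun_repr, EuclideanSpace.basisFun_apply]
    rfl
  have hfun : (fun y => φ (f y)) = ∑ k, φ (EuclideanSpace.single k (1:ℝ)) • g k := by
    funext y
    conv_lhs => rw [hexp (f y)]
    rw [map_sum]
    simp only [_root_.map_smul, smul_eq_mul, Finset.sum_apply, Pi.smul_apply]
    exact Finset.sum_congr rfl (fun k _ => mul_comm _ _)
  rw [hfun, lemT_sum μ T hTadd hTsmul Finset.univ _ g hgint]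
  rw [hexp ((WithLp.equiv 2 (Fin d → ℝ)).symm (fun j => T (g j) x)), map_sum]
  simp only [_root_.map_smul, smul_eq_mul, Finset.sum_apply, Pi.smul_apply, Equiv.apply_symm_apply]
  exact Finset.sum_congr rfl (fun k _ => mul_comm _ _)

section LemC
variable {E : Type*} [NormedAddCommGroup E] [NormedSpace ℝ E]

lemma lemConv {m : ℕ} {K : Set E} (hconv : Convex ℝ K) (h0 : (0:E) ∈ K)
    (w : Fin m → E) (hw : ∀ j, w j ∈ K) (a : Fin m → ℝ) (ha : ∀ j, 0 ≤ a j)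
    (hsum : ∑ j, a j ≤ 1) : ∑ j, a j • w j ∈ K := by
  set t := ∑ j, a j with ht
  have ht0 : 0 ≤ t := Finset.sum_nonneg (fun j _ => ha j)
  rcases eq_or_lt_of_le ht0 with h | h
  · have : ∀ j ∈ Finset.univ, a j = 0 :=
      (Finset.sum_eq_zero_iff_of_nonneg (fun j _ => ha j)).mp h.symm
    rw [Finset.sum_congr rfl (fun j hj => by rw [this j hj, zero_smul])]
    simpa using h0
  · have hk : ∑ j, (a j / t) • w j ∈ K := by
      refine hconv.sum_mem (fun j _ => div_nonneg (ha j) ht0) ?_ (fun j _ => hw j)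
      rw [← Finset.sum_div, ← ht, div_self h.ne']
    have heq : ∑ j, a j • w j = t • ∑ j, (a j / t) • w j := by
      rw [Finset.smul_sum]
      refine Finset.sum_congr rfl (fun j _ => ?_)
      rw [smul_smul, mul_div_cancel₀ _ h.ne']
    rw [heq]
    exact hconv.smul_mem_of_zero_mem h0 hk ⟨ht0, hsum⟩

lemma lemSymmSmul {K : Set E} (hconv : Convex ℝ K) (hsymm : ∀ v ∈ K, -v ∈ K)
    {v : E} (hv : v ∈ K) {s : ℝ} (hs : |s| ≤ 1) : s • v ∈ K := by
  have h1 : s • v = ((1 + s)/2) • v + ((1 - s)/2) • (-v) := by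
    rw [smul_neg, ← sub_eq_add_neg, ← sub_smul]
    congr 1
    ring
  rw [h1]
  have habs := abs_le.mp hs
  exact hconv hv (hsymm v hv) (by linarith) (by linarith) (by ring)
end LemC

lemma lemSign {n d : ℕ} (μ : Measure (EuclideanSpace ℝ (Fin n)))
    (Q₀ : Set (EuclideanSpace ℝ (Fin n)))
    (f : EuclideanSpace ℝ (Fin n) → EuclideanSpace ℝ (Fin d)) (hfint : Integrable f μ)
    (K : Set (EuclideanSpace ℝ (Fin d)))
    (hK : K = {v | ∃ ψ : EuclideanSpace ℝ (Fin n) → ℝ, Measurable ψ ∧ (∀ x, |ψ x| ≤ 1) ∧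
      v = (μ Q₀).toReal⁻¹ • ∫ x in Q₀, ψ x • f x ∂μ})
    (φ : EuclideanSpace ℝ (Fin d) →L[ℝ] ℝ) :
    ∃ v ∈ K, φ v = (μ Q₀).toReal⁻¹ * ∫ x in Q₀, |φ (f x)| ∂μ := by
  have hsm := hfint.1
  set f₀ := hsm.mk f with hf₀
  have hf₀meas : Measurable f₀ := hsm.stronglyMeasurable_mk.measurable
  have hff₀ : f =ᵐ[μ] f₀ := hsm.ae_eq_mk
  set ψ : EuclideanSpace ℝ (Fin n) → ℝ := fun x => if 0 ≤ φ (f₀ x) then 1 else -1 with hψ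
  have hψmeas : Measurable ψ := by
    refine Measurable.ite ?_ measurable_const measurable_const
    exact measurableSet_le measurable_const (φ.continuous.measurable.comp hf₀meas)
  have hψle : ∀ x, |ψ x| ≤ 1 := by
    intro x; rw [hψ]; by_cases h : 0 ≤ φ (f₀ x) <;> simp [h]
  refine ⟨(μ Q₀).toReal⁻¹ • ∫ x in Q₀, ψ x • f x ∂μ, by rw [hK]; exact ⟨ψ, hψmeas, hψle, rfl⟩, ?_⟩
  have hint : Integrable (fun x => ψ x • f x) (μ.restrict Q₀) := by
    refine Integrable.mono hfint.restrict.norm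
      ((hψmeas.aestronglyMeasurable).smul hfint.restrict.1) ?_
    filter_upwards with x
    rw [norm_smul, Real.norm_eq_abs, norm_norm]
    nlinarith [hψle x, norm_nonneg (f x), abs_nonneg (ψ x)]
  rw [_root_.map_smul, smul_eq_mul]
  congr 1
  rw [← φ.integral_comp_comm hint]
  refine integral_congr_ae ?_
  filter_upwards [ae_restrict_of_ae hff₀] with x hx
  rw [_root_.map_smul, smul_eq_mul, hx, hψ]
  by_cases h : 0 ≤ φ (f₀ x)
  · simp [h, abs_of_nonneg h]
  · push_neg at h
    simp [not_le.mpr h, abs_of_neg h]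

lemma lemCoord {m : ℕ} (z : EuclideanSpace ℝ (Fin m)) (i : Fin m) :
    |(WithLp.equiv 2 (Fin m → ℝ)) z i| ≤ ‖z‖ := by
  have h1 : (WithLp.equiv 2 (Fin m → ℝ)) z i
      = inner ℝ (EuclideanSpace.single i (1:ℝ)) z := by
    rw [EuclideanSpace.inner_single_left]
    simp
  rw [h1]
  calc |inner ℝ (EuclideanSpace.single i (1:ℝ)) z|
      ≤ ‖EuclideanSpace.single i (1:ℝ)‖ * ‖z‖ := abs_real_inner_le_norm _ _
    _ ≤ 1 * ‖z‖ := by gcongr; simp [EuclideanSpace.norm_single]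
    _ = ‖z‖ := one_mul _


set_option maxHeartbeats 2000000 in
/-- If `T` is a scalar linear operator of weak type `(1,1)` with respect to `μ` and
`f ∈ L¹(ℝⁿ; ℝᵈ)` is supported in `Q₀`, then for `λ > 0`,
`μ({x ∈ Q₀ : Tf(x) ∉ λ⟪f⟫_{Q₀}}) ≤ (d²/λ)·‖T‖_{L¹→L^{1,∞}}·μ(Q₀)`,
where `T` acts componentwise on `f` and `⟪f⟫_{Q₀}` is the convex body average. -/
theorem stmt7 {n d : ℕ} (μ : Measure (EuclideanSpace ℝ (Fin n)))
    (T : (EuclideanSpace ℝ (Fin n) → ℝ) → (EuclideanSpace ℝ (Fin n) → ℝ))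
    (hTadd : ∀ g₁ g₂, Integrable g₁ μ → Integrable g₂ μ → T (g₁ + g₂) = T g₁ + T g₂)
    (hTsmul : ∀ (a : ℝ) g, Integrable g μ → T (a • g) = a • T g)
    (CT : ℝ) (hCT : 0 ≤ CT)
    (hT : ∀ g, Integrable g μ → ∀ t : ℝ, 0 < t →
      μ {x | t < |T g x|} ≤ ENNReal.ofReal (CT / t * ∫ x, |g x| ∂μ))
    (Q₀ : Set (EuclideanSpace ℝ (Fin n))) (hQ₀ : MeasurableSet Q₀)
    (hpos : 0 < μ Q₀) (hfin : μ Q₀ < ⊤)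
    (f : EuclideanSpace ℝ (Fin n) → EuclideanSpace ℝ (Fin d))
    (hfint : Integrable f μ) (hfsupp : ∀ x ∉ Q₀, f x = 0)
    (K : Set (EuclideanSpace ℝ (Fin d)))
    (hK : K = {v | ∃ ψ : EuclideanSpace ℝ (Fin n) → ℝ, Measurable ψ ∧ (∀ x, |ψ x| ≤ 1) ∧
      v = (μ Q₀).toReal⁻¹ • ∫ x in Q₀, ψ x • f x ∂μ})
    (lam : ℝ) (hlam : 0 < lam) :
    μ {x ∈ Q₀ | (WithLp.equiv 2 (Fin d → ℝ)).symm
        (fun j => T (fun y => (WithLp.equiv 2 (Fin d → ℝ)) (f y) j) x) ∉ lam • K}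
      ≤ ENNReal.ofReal ((d : ℝ) ^ 2 / lam * CT) * μ Q₀ := by
  classical
  have hμtR : 0 < (μ Q₀).toReal := ENNReal.toReal_pos hpos.ne' hfin.ne
  have hK0 : (0 : EuclideanSpace ℝ (Fin d)) ∈ K := by
    rw [hK]
    exact ⟨fun _ => 0, measurable_const, by norm_num, by simp⟩
  -- the d = 0 case is trivial
  rcases Nat.eq_zero_or_pos d with hd | hd
  · subst hd
    haveI : Subsingleton (EuclideanSpace ℝ (Fin 0)) := by
      refine ⟨fun a b => ?_⟩
      apply (WithLp.equiv 2 (Fin 0 → ℝ)).injective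
      funext i; exact i.elim0
    have : {x ∈ Q₀ | (WithLp.equiv 2 (Fin 0 → ℝ)).symm
        (fun j => T (fun y => (WithLp.equiv 2 (Fin 0 → ℝ)) (f y) j) x) ∉ lam • K} = ∅ := by
      ext x
      simp only [Set.mem_setOf_eq, Set.mem_empty_iff_false, iff_false, not_and]
      intro _
      simp only [not_not]
      have hall : ∀ z w : EuclideanSpace ℝ (Fin 0), z = w := fun z w => Subsingleton.elim z w
      have hmem := Set.smul_mem_smul_set (a := lam) hK0
      have heq : lam • (0 : EuclideanSpace ℝ (Fin 0)) = (WithLp.equiv 2 (Fin 0 → ℝ)).symm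
          (fun j => T (fun y => (WithLp.equiv 2 (Fin 0 → ℝ)) (f y) j) x) := hall _ _
      rw [heq] at hmem
      exact hmem
    rw [this]
    simp
  -- main case
  have hIntPsi : ∀ ψ : EuclideanSpace ℝ (Fin n) → ℝ, Measurable ψ → (∀ x, |ψ x| ≤ 1) →
      Integrable (fun x => ψ x • f x) (μ.restrict Q₀) := by
    intro ψ hm hb
    refine Integrable.mono hfint.restrict.norm
      ((hm.aestronglyMeasurable).smul hfint.restrict.1) ?_
    filter_upwards with x
    rw [norm_smul, Real.norm_eq_abs, norm_norm]
    nlinarith [hb x, norm_nonneg (f x), abs_nonneg (ψ x)]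
  have hKconv : Convex ℝ K := by
    rintro v₁ hv₁ v₂ hv₂ a b ha hb hab
    rw [hK] at hv₁ hv₂ ⊢
    obtain ⟨ψ₁, hm₁, hb₁, rfl⟩ := hv₁
    obtain ⟨ψ₂, hm₂, hb₂, rfl⟩ := hv₂
    refine ⟨fun x => a * ψ₁ x + b * ψ₂ x, by fun_prop, ?_, ?_⟩
    · intro x
      calc |a * ψ₁ x + b * ψ₂ x| ≤ |a * ψ₁ x| + |b * ψ₂ x| := abs_add_le _ _
        _ ≤ a * 1 + b * 1 := by
            rw [abs_mul, abs_mul, abs_of_nonneg ha, abs_of_nonneg hb]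
            gcongr; exacts [hb₁ x, hb₂ x]
        _ = 1 := by linarith
    · have h1 : ∀ x, (a * ψ₁ x + b * ψ₂ x) • f x = a • (ψ₁ x • f x) + b • (ψ₂ x • f x) := by
        intro x; rw [add_smul, smul_smul, smul_smul]
      simp only [h1]
      have hA : Integrable (fun x => a • (ψ₁ x • f x)) (μ.restrict Q₀) :=
        (hIntPsi ψ₁ hm₁ hb₁).smul a
      have hB : Integrable (fun x => b • (ψ₂ x • f x)) (μ.restrict Q₀) :=
        (hIntPsi ψ₂ hm₂ hb₂).smul b
      have h2 : ∫ x in Q₀, (a • (ψ₁ x • f x) + b • (ψ₂ x • f x)) ∂μ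
          = a • (∫ x in Q₀, ψ₁ x • f x ∂μ) + b • (∫ x in Q₀, ψ₂ x • f x ∂μ) := by
        rw [integral_add hA hB, integral_smul, integral_smul]
      rw [h2, smul_add, smul_comm a, smul_comm b]
  have hKsymm : ∀ v ∈ K, -v ∈ K := by
    intro v hv
    rw [hK] at hv ⊢
    obtain ⟨ψ, hm, hb, rfl⟩ := hv
    refine ⟨fun x => -ψ x, hm.neg, fun x => by rw [abs_neg]; exact hb x, ?_⟩
    have h1 : ∀ x, (-ψ x) • f x = -(ψ x • f x) := fun x => by rw [neg_smul]
    simp only [h1]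
    rw [integral_neg, smul_neg]
  have hKbdd : ∀ v ∈ K, ‖v‖ ≤ (μ Q₀).toReal⁻¹ * ∫ x in Q₀, ‖f x‖ ∂μ := by
    intro v hv
    rw [hK] at hv
    obtain ⟨ψ, hm, hb, rfl⟩ := hv
    rw [norm_smul, Real.norm_eq_abs, abs_of_nonneg (by positivity)]
    gcongr
    calc ‖∫ x in Q₀, ψ x • f x ∂μ‖ ≤ ∫ x in Q₀, ‖ψ x • f x‖ ∂μ :=
        norm_integral_le_integral_norm _
      _ ≤ ∫ x in Q₀, ‖f x‖ ∂μ := by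
          refine integral_mono (hIntPsi ψ hm hb).norm hfint.restrict.norm (fun x => ?_)
          rw [norm_smul, Real.norm_eq_abs]
          nlinarith [hb x, norm_nonneg (f x), abs_nonneg (ψ x)]
  -- the span of K and its coordinates
  set Rb := (μ Q₀).toReal⁻¹ * ∫ x in Q₀, ‖f x‖ ∂μ with hRb
  set V : Submodule ℝ (EuclideanSpace ℝ (Fin d)) := Submodule.span ℝ K with hV
  have hKV : K ⊆ (V : Set (EuclideanSpace ℝ (Fin d))) := Submodule.subset_span
  set m := Module.finrank ℝ V with hm
  have hmd : m ≤ d := by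
    have h1 := Submodule.finrank_le V
    rwa [finrank_euclideanSpace, Fintype.card_fin] at h1
  set L := (stdOrthonormalBasis ℝ V).repr with hL
  set qL := (WithLp.linearEquiv 2 ℝ (Fin m → ℝ)) with hqL
  set Ψ : V ≃ₗ[ℝ] (Fin m → ℝ) := L.toLinearEquiv.trans qL with hΨ
  have hΨnorm : ∀ z : V, ∀ i, |Ψ z i| ≤ ‖z‖ := by
    intro z i
    have h1 : Ψ z i = (WithLp.equiv 2 (Fin m → ℝ)) (L z) i := rfl
    rw [h1]
    calc |(WithLp.equiv 2 (Fin m → ℝ)) (L z) i| ≤ ‖L z‖ := lemCoord _ _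
      _ = ‖z‖ := L.norm_map z
  set KV : Set V := Subtype.val ⁻¹' K with hKV'
  set S : Set (Fin m → ℝ) := (fun k : V => Ψ k) '' KV with hS
  have hspanKV : Submodule.span ℝ KV = ⊤ := by
    apply Submodule.map_injective_of_injective (V.injective_subtype)
    rw [← Submodule.span_image, Submodule.map_top, Submodule.range_subtype]
    have h1 : ⇑V.subtype '' KV = K := by
      rw [Submodule.coe_subtype]
      apply Set.image_preimage_eq_of_subset
      intro k hk
      exact ⟨⟨k, hKV hk⟩, rfl⟩
    rw [h1, ← hV]
  have hspanS : Submodule.span ℝ S = ⊤ := by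
    rw [hS, show (fun k : V => Ψ k) = (Ψ.toLinearMap : V → Fin m → ℝ) from rfl, Submodule.span_image, hspanKV, Submodule.map_top]
    exact LinearEquiv.range Ψ
  have hSbdd : ∀ w ∈ S, ∀ i, |w i| ≤ max Rb 0 := by
    rintro w ⟨k, hk, rfl⟩ i
    calc |Ψ k i| ≤ ‖k‖ := hΨnorm k i
      _ = ‖(k : EuclideanSpace ℝ (Fin d))‖ := rfl
      _ ≤ Rb := hKbdd _ hk
      _ ≤ max Rb 0 := le_max_left _ _
  -- the key estimate, for every ε > 0
  have key : ∀ ε : ℝ, 0 < ε →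
      μ {x ∈ Q₀ | (WithLp.equiv 2 (Fin d → ℝ)).symm
        (fun j => T (fun y => (WithLp.equiv 2 (Fin d → ℝ)) (f y) j) x) ∉ lam • K}
      ≤ ENNReal.ofReal ((d : ℝ) ^ 2 / lam * CT * (1 + ε)) * μ Q₀ := by
    intro ε hε
    obtain ⟨v', u', hv'S, hu'bd, hrep⟩ := lemB S (max Rb 0) hSbdd hspanS ε hε
    -- pull back the vectors to K
    have hv'K : ∀ j, ∃ k : V, (k : EuclideanSpace ℝ (Fin d)) ∈ K ∧ Ψ k = v' j := by
      intro j
      obtain ⟨k, hk, hke⟩ := hv'S j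
      exact ⟨k, hk, hke⟩
    choose vV hvK hvΨ using hv'K
    -- the functionals
    set P := V.orthogonalProjectionOnto with hP
    set dotL : (Fin m → ℝ) → ((Fin m → ℝ) →ₗ[ℝ] ℝ) := fun u =>
      { toFun := fun w => dotProduct u w,
        map_add' := by intros; simp [dotProduct_add],
        map_smul' := by intros; simp [dotProduct_smul] } with hdotL
    set φL : Fin m → (EuclideanSpace ℝ (Fin d) →ₗ[ℝ] ℝ) := fun j =>
      (dotL (u' j)) ∘ₗ (Ψ.toLinearMap ∘ₗ (P.toLinearMap)) with hφL
    have hφLapply : ∀ j, ∀ z, φL j z = dotProduct (u' j) (Ψ (P z)) := fun j z => rfl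
    have hPmem : ∀ z : EuclideanSpace ℝ (Fin d), ∀ hz : z ∈ V, P z = ⟨z, hz⟩ := by
      intro z hz
      exact Submodule.orthogonalProjectionOnto_mem_subspace_eq_self (⟨z, hz⟩ : V)
    -- bound of φL on K
    have hφLK : ∀ j, ∀ w ∈ K, |φL j w| ≤ 1 + ε := by
      intro j w hw
      rw [hφLapply, hPmem w (hKV hw)]
      exact hu'bd j _ ⟨⟨w, hKV hw⟩, hw, rfl⟩
    -- representation
    have hrepV : ∀ z : EuclideanSpace ℝ (Fin d), z ∈ V →
        z = ∑ j, (φL j z) • (vV j : EuclideanSpace ℝ (Fin d)) := by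
      intro z hz
      have h1 := hrep (Ψ ⟨z, hz⟩)
      have h2 : (⟨z, hz⟩ : V) = ∑ j, (dotProduct (u' j) (Ψ ⟨z, hz⟩)) • vV j := by
        apply Ψ.injective
        rw [map_sum]
        conv_lhs => rw [h1]
        refine Finset.sum_congr rfl (fun j _ => ?_)
        rw [_root_.map_smul, hvΨ]
      calc z = ((∑ j, (dotProduct (u' j) (Ψ ⟨z, hz⟩)) • vV j : V) :
            EuclideanSpace ℝ (Fin d)) := congrArg Subtype.val h2
        _ = ∑ j, (dotProduct (u' j) (Ψ ⟨z, hz⟩)) • (vV j : EuclideanSpace ℝ (Fin d)) := by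
            push_cast
            rfl
        _ = ∑ j, (φL j z) • (vV j : EuclideanSpace ℝ (Fin d)) := by
            refine Finset.sum_congr rfl (fun j _ => ?_)
            rw [hφLapply, hPmem z hz]
    -- continuous versions and integrability
    set φC : Fin m → (EuclideanSpace ℝ (Fin d) →L[ℝ] ℝ) := fun j =>
      LinearMap.toContinuousLinearMap (φL j) with hφC
    have hφCL : ∀ j, ∀ z, φC j z = φL j z := fun j z => rfl
    have hφint : ∀ j, Integrable (fun y => φL j (f y)) μ := by
      intro j
      have : (fun y => φL j (f y)) = fun y => φC j (f y) := rfl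
      rw [this]
      exact (φC j).integrable_comp hfint
    -- the integral bound
    have hφabs : ∀ j, ∫ y, |φL j (f y)| ∂μ ≤ (1 + ε) * (μ Q₀).toReal := by
      intro j
      obtain ⟨v, hvKmem, hveq⟩ := lemSign μ Q₀ f hfint K hK (φC j)
      have h1 : ∫ y, |φL j (f y)| ∂μ = ∫ y in Q₀, |φC j (f y)| ∂μ := by
        have h0 : ∀ x, x ∉ Q₀ → |φC j (f x)| = 0 := by
          intro x hx; rw [hfsupp x hx]; simp
        exact (setIntegral_eq_integral_of_forall_compl_eq_zero h0).symm
      rw [h1]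
      have h2 : ∫ y in Q₀, |φC j (f y)| ∂μ = (μ Q₀).toReal * (φC j v) := by
        rw [hveq]
        field_simp
      rw [h2]
      have h3 : φC j v ≤ 1 + ε := by
        rw [hφCL j]
        exact le_trans (le_abs_self _) (hφLK j v hvKmem)
      calc (μ Q₀).toReal * (φC j v) ≤ (μ Q₀).toReal * (1 + ε) := by gcongr
        _ = (1 + ε) * (μ Q₀).toReal := mul_comm _ _
    -- the exceptional sets
    set Ebad : Fin m → Set (EuclideanSpace ℝ (Fin n)) := fun j =>
      {x | lam / d < |T (fun y => φL j (f y)) x|} with hEbad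
    have hEbadm : ∀ j, μ (Ebad j) ≤
        ENNReal.ofReal (CT / (lam / d) * ((1 + ε) * (μ Q₀).toReal)) := by
      intro j
      refine le_trans (hT _ (hφint j) (lam / d) (by positivity)) ?_
      apply ENNReal.ofReal_le_ofReal
      exact mul_le_mul_of_nonneg_left (hφabs j) (by positivity)
    -- the null set from the orthogonal complement
    set W := Vᗮ with hW
    set bW := stdOrthonormalBasis ℝ W with hbW
    set χC : Fin (Module.finrank ℝ W) → (EuclideanSpace ℝ (Fin d) →L[ℝ] ℝ) := fun i =>
      innerSL ℝ ((bW i : EuclideanSpace ℝ (Fin d))) with hχC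
    set χL : Fin (Module.finrank ℝ W) → (EuclideanSpace ℝ (Fin d) →ₗ[ℝ] ℝ) := fun i =>
      (χC i : EuclideanSpace ℝ (Fin d) →ₗ[ℝ] ℝ) with hχL
    have hχK : ∀ i, ∀ k ∈ K, χC i k = 0 := by
      intro i k hk
      have h1 : (bW i : EuclideanSpace ℝ (Fin d)) ∈ Vᗮ := (bW i).2
      have h2 := (Submodule.mem_orthogonal' V _).mp h1 k (hKV hk)
      simpa [hχC] using h2
    have hχint : ∀ i, Integrable (fun y => χL i (f y)) μ := by
      intro i
      exact (χC i).integrable_comp hfint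
    have hχzero : ∀ i, ∫ y, |χL i (f y)| ∂μ = 0 := by
      intro i
      obtain ⟨v, hvKmem, hveq⟩ := lemSign μ Q₀ f hfint K hK (χC i)
      have h1 : ∫ y, |χL i (f y)| ∂μ = ∫ y in Q₀, |χC i (f y)| ∂μ := by
        have h0 : ∀ x, x ∉ Q₀ → |χC i (f x)| = 0 := by
          intro x hx; rw [hfsupp x hx]; simp
        exact (setIntegral_eq_integral_of_forall_compl_eq_zero h0).symm
      have h2 : (μ Q₀).toReal⁻¹ * ∫ y in Q₀, |χC i (f y)| ∂μ = 0 := by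
        rw [← hveq, hχK i v hvKmem]
      rw [h1]
      rcases mul_eq_zero.mp h2 with h | h
      · exact absurd h (inv_ne_zero hμtR.ne')
      · exact h
    -- the null sets
    have hNnull : ∀ i, μ {x | T (fun y => χL i (f y)) x ≠ 0} = 0 := by
      intro i
      have hsub : {x | T (fun y => χL i (f y)) x ≠ 0} ⊆
          ⋃ k : ℕ, {x | ((k : ℝ) + 1)⁻¹ < |T (fun y => χL i (f y)) x|} := by
        intro x hx
        have h0 : 0 < |T (fun y => χL i (f y)) x| := abs_pos.mpr hx
        obtain ⟨k, hk⟩ := exists_nat_one_div_lt h0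
        rw [one_div] at hk
        exact Set.mem_iUnion.mpr ⟨k, hk⟩
      have hk0 : ∀ k : ℕ, μ {x | ((k : ℝ) + 1)⁻¹ < |T (fun y => χL i (f y)) x|} = 0 := by
        intro k
        refine le_antisymm (le_trans (hT _ (hχint i) _ (by positivity)) ?_) (by simp)
        rw [hχzero i]
        simp
      refine le_antisymm (le_trans (measure_mono hsub) ?_) (by simp)
      refine le_trans (measure_iUnion_le _) ?_
      simp [hk0]
    -- the inclusion
    have hincl : {x ∈ Q₀ | (WithLp.equiv 2 (Fin d → ℝ)).symm
        (fun j => T (fun y => (WithLp.equiv 2 (Fin d → ℝ)) (f y) j) x) ∉ lam • K} ⊆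
        (⋃ j, Ebad j) ∪ (⋃ i, {x | T (fun y => χL i (f y)) x ≠ 0}) := by
      rintro x ⟨hxQ, hxK⟩
      rw [Set.mem_union]
      by_contra hcon
      push_neg at hcon
      obtain ⟨hA, hB⟩ := hcon
      rw [Set.mem_iUnion] at hA hB
      push_neg at hA hB
      set z := (WithLp.equiv 2 (Fin d → ℝ)).symm
        (fun j => T (fun y => (WithLp.equiv 2 (Fin d → ℝ)) (f y) j) x) with hz
      -- z belongs to V
      have hzV : z ∈ V := by
        rw [← Submodule.orthogonal_orthogonal V]
        rw [Submodule.mem_orthogonal]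
        intro u hu
        have hu2 : (⟨u, hu⟩ : W) = ∑ i, (bW.repr ⟨u, hu⟩ i) • bW i := (bW.sum_repr _).symm
        have hcoe : u = ((∑ i, (bW.repr ⟨u, hu⟩ i) • bW i : W) : EuclideanSpace ℝ (Fin d)) :=
          congrArg Subtype.val hu2
        have hcoe2 : u = ∑ i, (bW.repr ⟨u, hu⟩ i) • ((bW i : W) : EuclideanSpace ℝ (Fin d)) := by
          conv_lhs => rw [hcoe]
          push_cast
          rfl
        conv_lhs => rw [hcoe2]
        rw [sum_inner]
        refine Finset.sum_eq_zero (fun i _ => ?_)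
        rw [real_inner_smul_left]
        have hzero : T (fun y => χL i (f y)) x = 0 := by
          have := hB i
          simpa using this
        have h3 := lemA μ T hTadd hTsmul f hfint (χL i) x
        rw [hzero] at h3
        have h4 : inner ℝ ((bW i : W) : EuclideanSpace ℝ (Fin d)) z = (0 : ℝ) := by
          have h5 : χL i z = inner ℝ ((bW i : W) : EuclideanSpace ℝ (Fin d)) z := by
            simp [hχL, hχC]
          rw [← h5, ← hz] at *
          exact h3.symm
        rw [h4, mul_zero]
      -- coefficient bounds
      have hcj : ∀ j, |φL j z| ≤ lam / d := by
        intro j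
        have h3 := lemA μ T hTadd hTsmul f hfint (φL j) x
        rw [← hz] at h3
        rw [← h3]
        have := hA j
        rw [hEbad] at this
        simp only [Set.mem_setOf_eq, not_lt] at this
        exact this
      -- build the membership
      set w : Fin m → EuclideanSpace ℝ (Fin d) :=
        fun j => ((d : ℝ) / lam * φL j z) • (vV j : EuclideanSpace ℝ (Fin d)) with hw
      have hdpos : (0 : ℝ) < d := by exact_mod_cast hd
      have hwK : ∀ j, w j ∈ K := by
        intro j
        refine lemSymmSmul hKconv hKsymm (hvK j) ?_
        rw [abs_mul, abs_of_nonneg (by positivity : (0:ℝ) ≤ (d : ℝ) / lam)]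
        calc (d : ℝ) / lam * |φL j z| ≤ (d : ℝ) / lam * (lam / d) := by
              gcongr
              exact hcj j
          _ = 1 := by field_simp
      have hyK : ∑ j, (1 / (d : ℝ)) • w j ∈ K := by
        refine lemConv hKconv hK0 w hwK (fun _ => 1 / (d : ℝ)) (fun _ => by positivity) ?_
        rw [Finset.sum_const, Finset.card_univ, Fintype.card_fin, nsmul_eq_mul]
        rw [mul_one_div, div_le_one hdpos]
        exact_mod_cast hmd
      have hzy : z = lam • ∑ j, (1 / (d : ℝ)) • w j := by
        rw [Finset.smul_sum]
        calc z = ∑ j, (φL j z) • (vV j : EuclideanSpace ℝ (Fin d)) := hrepV z hzV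
          _ = ∑ j, lam • (1 / (d : ℝ)) • w j := by
              refine Finset.sum_congr rfl (fun j _ => ?_)
              have hsc : lam • (1 / (d : ℝ)) • w j
                  = (lam * (1 / (d : ℝ)) * ((d : ℝ) / lam * φL j z)) •
                    (vV j : EuclideanSpace ℝ (Fin d)) := by
                simp only [hw]
                rw [smul_smul, smul_smul]
              rw [hsc]
              congr 1
              field_simp
      exact hxK (Set.mem_smul_set.mpr ⟨_, hyK, hzy.symm⟩)
    -- putting the measures together
    refine le_trans (measure_mono hincl) ?_
    refine le_trans (measure_union_le _ _) ?_
    rw [measure_iUnion_null (fun i => hNnull i), add_zero]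
    refine le_trans (measure_iUnion_fintype_le _ _) ?_
    refine le_trans (Finset.sum_le_sum (fun j _ => hEbadm j)) ?_
    rw [Finset.sum_const, Finset.card_univ, Fintype.card_fin, nsmul_eq_mul]
    have hdpos : (0 : ℝ) < d := by exact_mod_cast hd
    calc (m : ℝ≥0∞) * ENNReal.ofReal (CT / (lam / d) * ((1 + ε) * (μ Q₀).toReal))
        ≤ (d : ℝ≥0∞) * ENNReal.ofReal (CT / (lam / d) * ((1 + ε) * (μ Q₀).toReal)) := by
          gcongr
      _ = ENNReal.ofReal ((d : ℝ)) * ENNReal.ofReal (CT / (lam / d) * ((1 + ε) * (μ Q₀).toReal)) := by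
          rw [ENNReal.ofReal_natCast]
      _ = ENNReal.ofReal ((d : ℝ) * (CT / (lam / d) * ((1 + ε) * (μ Q₀).toReal))) :=
          (ENNReal.ofReal_mul (by positivity)).symm
      _ = ENNReal.ofReal ((d : ℝ) ^ 2 / lam * CT * (1 + ε) * (μ Q₀).toReal) := by
          congr 1
          field_simp
      _ = ENNReal.ofReal ((d : ℝ) ^ 2 / lam * CT * (1 + ε)) * μ Q₀ := by
          rw [ENNReal.ofReal_mul (by positivity), ENNReal.ofReal_toReal hfin.ne]
  -- pass to the limit ε → 0
  set c := (d : ℝ) ^ 2 / lam * CT with hc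
  have hc0 : 0 ≤ c := by positivity
  refine ENNReal.le_of_forall_pos_le_add (fun δ hδ hlt => ?_)
  set M := (μ Q₀).toReal with hM
  set ε := (δ : ℝ) / ((c + 1) * (M + 1)) with hε
  have hδR : (0 : ℝ) < δ := hδ
  have hεpos : 0 < ε := by positivity
  refine le_trans (key ε hεpos) ?_
  have h1 : ENNReal.ofReal (c * (1 + ε)) * μ Q₀
      ≤ ENNReal.ofReal c * μ Q₀ + ENNReal.ofReal (c * ε) * μ Q₀ := by
    rw [← add_mul]
    gcongr
    rw [mul_add, mul_one]
    exact ENNReal.ofReal_add_le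
  refine le_trans h1 ?_
  gcongr
  have h2 : ENNReal.ofReal (c * ε) * μ Q₀ = ENNReal.ofReal (c * ε * M) := by
    conv_lhs => rw [← ENNReal.ofReal_toReal hfin.ne]
    rw [← ENNReal.ofReal_mul (by positivity)]
  rw [h2]
  have h3 : c * ε * M ≤ (δ : ℝ) := by
    have hX : (0:ℝ) < (c + 1) * (M + 1) := by positivity
    have h4 : c * ε * M = (δ : ℝ) * (c * M) / ((c + 1) * (M + 1)) := by
      rw [hε]; ring
    rw [h4, div_le_iff₀ hX]
    nlinarith [hμtR, hδR.le, hc0]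
  calc ENNReal.ofReal (c * ε * M) ≤ ENNReal.ofReal (δ : ℝ) := ENNReal.ofReal_le_ofReal h3
    _ = (δ : ℝ≥0∞) := ENNReal.ofReal_coe_nnreal
end

section
/- Let m ∈ ℕ, γ ∈ [0,1], and p = m + γ. Then for any sequence {a_i} of nonnegative real numbers, (Σ_i a_i)^p ≤ (m+1) Σ_{i₁,...,i_m} a_{i₁}⋯a_{i_m} (Σ_{j ≤ min{i₁,...,i_m}} a_j)^γ. -/
/-- `x^(n+1) - y^(n+1) ≤ (n+1)(x-y)x^n` for `0 ≤ y ≤ x`. -/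
lemma aux_pow_sub (n : ℕ) {x y : ℝ} (hy : 0 ≤ y) (hxy : y ≤ x) :
    x ^ (n + 1) - y ^ (n + 1) ≤ (n + 1 : ℝ) * (x - y) * x ^ n := by
  have hx : 0 ≤ x := hy.trans hxy
  rw [← geom_sum₂_mul x y (n + 1)]
  have hb : ∑ i ∈ Finset.range (n + 1), x ^ i * y ^ (n - i) ≤ (n + 1 : ℝ) * x ^ n := by
    calc ∑ i ∈ Finset.range (n + 1), x ^ i * y ^ (n - i)
        ≤ ∑ i ∈ Finset.range (n + 1), x ^ n := by
          refine Finset.sum_le_sum fun i hi => ?_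
          have hi' : i ≤ n := Nat.lt_succ_iff.mp (Finset.mem_range.mp hi)
          calc x ^ i * y ^ (n - i) ≤ x ^ i * x ^ (n - i) := by
                exact mul_le_mul_of_nonneg_left (pow_le_pow_left₀ hy hxy _) (pow_nonneg hx i)
            _ = x ^ n := by rw [← pow_add, Nat.add_sub_cancel' hi']
      _ = (n + 1 : ℝ) * x ^ n := by
          rw [Finset.sum_const, Finset.card_range, nsmul_eq_mul]; push_cast; ring
  have hsub : 0 ≤ x - y := sub_nonneg.mpr hxy
  calc (∑ i ∈ Finset.range (n + 1), x ^ i * y ^ (n + 1 - 1 - i)) * (x - y)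
      ≤ ((n + 1 : ℝ) * x ^ n) * (x - y) := by
        exact mul_le_mul_of_nonneg_right (by simpa using hb) hsub
    _ = (n + 1 : ℝ) * (x - y) * x ^ n := by ring

/-- key: `(∑ a)^(m+1) ≤ (m+1) ∑_j a_j (tail sum from j)^m`. -/
lemma aux_main (m : ℕ) (a : ℕ → ℝ) (ha : ∀ i, 0 ≤ a i) (s : Finset ℕ) :
    (∑ i ∈ s, a i) ^ (m + 1) ≤
      (m + 1 : ℝ) * ∑ j ∈ s, a j * (∑ i ∈ s.filter (fun i => j ≤ i), a i) ^ m := by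
  induction s using Finset.induction_on_min with
  | empty => simp
  | insert j0 s hlt ih =>
    have hj0 : j0 ∉ s := fun h => lt_irrefl j0 (hlt j0 h)
    have hS' : (0:ℝ) ≤ ∑ i ∈ s, a i := Finset.sum_nonneg fun i _ => ha i
    have hfilt0 : (insert j0 s).filter (fun i => j0 ≤ i) = insert j0 s := by
      apply Finset.filter_true_of_mem
      intro x hx
      rcases Finset.mem_insert.mp hx with rfl | hx
      · exact le_refl _
      · exact (hlt x hx).le
    have hfilt : ∀ j ∈ s, (insert j0 s).filter (fun i => j ≤ i) = s.filter (fun i => j ≤ i) := by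
      intro j hj
      rw [Finset.filter_insert, if_neg (not_le.mpr (hlt j hj))]
    rw [Finset.sum_insert hj0, Finset.sum_insert hj0, hfilt0]
    rw [show (∑ j ∈ s, a j * (∑ i ∈ (insert j0 s).filter (fun i => j ≤ i), a i) ^ m)
        = ∑ j ∈ s, a j * (∑ i ∈ s.filter (fun i => j ≤ i), a i) ^ m from
      Finset.sum_congr rfl fun j hj => by rw [hfilt j hj]]
    rw [← Finset.sum_insert hj0]
    set S : ℝ := ∑ i ∈ insert j0 s, a i with hSdef
    have hSsum : S = a j0 + ∑ i ∈ s, a i := by rw [hSdef, Finset.sum_insert hj0]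
    have hle : (∑ i ∈ s, a i) ≤ S := by rw [hSsum]; linarith [ha j0]
    have h1 : S ^ (m + 1) - (∑ i ∈ s, a i) ^ (m + 1) ≤ (m + 1 : ℝ) * a j0 * S ^ m := by
      have := aux_pow_sub m hS' hle
      have hxy : S - ∑ i ∈ s, a i = a j0 := by rw [hSsum]; ring
      rw [hxy] at this; exact this
    have h2 := ih
    rw [mul_add]
    linarith [h1, h2]

lemma aux_swap (m : ℕ) (a : ℕ → ℝ) (s : Finset ℕ) :
    ∑ t ∈ Fintype.piFinset (fun _ : Fin m => s),
        (∏ k, a (t k)) * (∑ j ∈ s.filter (fun j => ∀ k, j ≤ t k), a j)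
      = ∑ j ∈ s, a j * (∑ i ∈ s.filter (fun i => j ≤ i), a i) ^ m := by
  classical
  have h1 : ∀ t : Fin m → ℕ,
      (∏ k, a (t k)) * (∑ j ∈ s.filter (fun j => ∀ k, j ≤ t k), a j)
        = ∑ j ∈ s, if (∀ k, j ≤ t k) then (∏ k, a (t k)) * a j else 0 := by
    intro t
    rw [Finset.sum_filter, Finset.mul_sum]
    exact Finset.sum_congr rfl fun j _ => by rw [mul_ite, mul_zero]
  rw [Finset.sum_congr rfl fun t _ => h1 t, Finset.sum_comm]
  refine Finset.sum_congr rfl fun j hj => ?_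
  rw [← Finset.sum_filter]
  have h2 : (Fintype.piFinset (fun _ : Fin m => s)).filter (fun t => ∀ k, j ≤ t k)
      = Fintype.piFinset (fun _ : Fin m => s.filter (fun i => j ≤ i)) := by
    ext t
    simp only [Finset.mem_filter, Fintype.mem_piFinset, forall_and]
  rw [h2, Finset.sum_pow' (s.filter (fun i => j ≤ i)) a m]
  rw [Finset.mul_sum, Finset.sum_congr rfl fun t _ => mul_comm (∏ k, a (t k)) (a j)]

/-- Expansion of `(∑ a_i)^p` for `p = m + γ`, `m ∈ ℕ`, `γ ∈ [0,1]`: for nonnegative `a`,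
`(∑_i a_i)^p ≤ (m+1) ∑_{i₁,…,i_m} a_{i₁}⋯a_{i_m} (∑_{j ≤ min{i₁,…,i_m}} a_j)^γ`. -/
theorem stmt10 (m : ℕ) (γ : ℝ) (hγ0 : 0 ≤ γ) (hγ1 : γ ≤ 1)
    (s : Finset ℕ) (a : ℕ → ℝ) (ha : ∀ i, 0 ≤ a i) :
    (∑ i ∈ s, a i) ^ ((m : ℝ) + γ) ≤
      ((m : ℝ) + 1) * ∑ t ∈ Fintype.piFinset (fun _ : Fin m => s),
        (∏ k, a (t k)) *
          (∑ j ∈ s.filter (fun j => ∀ k, j ≤ t k), a j) ^ γ := by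
  classical
  set S : ℝ := ∑ i ∈ s, a i with hSdef
  have hS0 : 0 ≤ S := Finset.sum_nonneg fun i _ => ha i
  -- case m = 0 : equality
  rcases Nat.eq_zero_or_pos m with rfl | hm
  · have huniq : Fintype.piFinset (fun _ : Fin 0 => s) = {(default : Fin 0 → ℕ)} := by
      ext t
      simp only [Finset.mem_singleton, Fintype.mem_piFinset]
      exact ⟨fun _ => Subsingleton.elim t default, fun _ k => k.elim0⟩
    rw [huniq, Finset.sum_singleton]
    have hfilt : s.filter (fun j => ∀ k : Fin 0, j ≤ (default : Fin 0 → ℕ) k) = s :=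
      Finset.filter_true_of_mem fun x _ => fun k => k.elim0
    simp [hfilt, ← hSdef]
  -- case S = 0, m > 0
  rcases eq_or_lt_of_le hS0 with hS | hS
  · have hzero : ∀ i ∈ s, a i = 0 := by
      intro i hi
      have := (Finset.sum_eq_zero_iff_of_nonneg fun i _ => ha i).mp hS.symm
      exact this i hi
    have hL : S ^ ((m : ℝ) + γ) = 0 := by
      rw [← hS]
      exact Real.zero_rpow (by positivity)
    rw [hL]
    have : ∀ t ∈ Fintype.piFinset (fun _ : Fin m => s),
        (0:ℝ) ≤ (∏ k, a (t k)) * (∑ j ∈ s.filter (fun j => ∀ k, j ≤ t k), a j) ^ γ := by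
      intro t _
      exact mul_nonneg (Finset.prod_nonneg fun k _ => ha (t k))
        (Real.rpow_nonneg (Finset.sum_nonneg fun j _ => ha j) γ)
    exact mul_nonneg (by positivity) (Finset.sum_nonneg this)
  -- main case S > 0
  · set B : (Fin m → ℕ) → ℝ := fun t => ∑ j ∈ s.filter (fun j => ∀ k, j ≤ t k), a j with hBdef
    have hB0 : ∀ t, 0 ≤ B t := fun t => Finset.sum_nonneg fun j _ => ha j
    have hBS : ∀ t, B t ≤ S :=
      fun t => Finset.sum_le_sum_of_subset_of_nonneg (Finset.filter_subset _ _)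
        (fun i hi _ => ha i)
    have key : ∀ t, B t * S ^ (γ - 1) ≤ (B t) ^ γ := by
      intro t
      rcases eq_or_lt_of_le (hB0 t) with h0 | h0
      · rw [← h0]
        simpa using Real.rpow_nonneg (le_refl (0:ℝ)) γ
      · have h1 : S ^ (γ - 1) ≤ (B t) ^ (γ - 1) :=
          Real.rpow_le_rpow_of_nonpos h0 (hBS t) (by linarith)
        calc B t * S ^ (γ - 1) ≤ B t * (B t) ^ (γ - 1) :=
              mul_le_mul_of_nonneg_left h1 (hB0 t)
          _ = (B t) ^ (1 + (γ - 1)) := by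
              rw [Real.rpow_add h0, Real.rpow_one]
          _ = (B t) ^ γ := by ring_nf
    have hpow : S ^ ((m : ℝ) + γ) = S ^ (m + 1) * S ^ (γ - 1) := by
      rw [← Real.rpow_natCast S (m + 1), ← Real.rpow_add hS]
      push_cast
      ring_nf
    rw [hpow]
    have step1 : S ^ (m + 1) * S ^ (γ - 1) ≤
        ((m : ℝ) + 1) * (∑ j ∈ s, a j * (∑ i ∈ s.filter (fun i => j ≤ i), a i) ^ m) *
          S ^ (γ - 1) :=
      mul_le_mul_of_nonneg_right (aux_main m a ha s) (Real.rpow_nonneg hS0 _)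
    have hswap := aux_swap m a s
    calc S ^ (m + 1) * S ^ (γ - 1)
        ≤ ((m : ℝ) + 1) * (∑ j ∈ s, a j * (∑ i ∈ s.filter (fun i => j ≤ i), a i) ^ m) *
            S ^ (γ - 1) := step1
      _ = ((m : ℝ) + 1) *
            ((∑ t ∈ Fintype.piFinset (fun _ : Fin m => s), (∏ k, a (t k)) * B t) *
              S ^ (γ - 1)) := by rw [hswap]; ring
      _ = ((m : ℝ) + 1) *
            (∑ t ∈ Fintype.piFinset (fun _ : Fin m => s),
              (∏ k, a (t k)) * (B t * S ^ (γ - 1))) := by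
          congr 1
          rw [Finset.sum_mul]
          exact Finset.sum_congr rfl fun t _ => mul_assoc _ _ _
      _ ≤ ((m : ℝ) + 1) *
            (∑ t ∈ Fintype.piFinset (fun _ : Fin m => s),
              (∏ k, a (t k)) * (B t) ^ γ) := by
          refine mul_le_mul_of_nonneg_left ?_ (by positivity)
          refine Finset.sum_le_sum fun t _ => ?_
          exact mul_le_mul_of_nonneg_left (key t)
            (Finset.prod_nonneg fun k _ => ha (t k))
end

section
/- (Orlicz maximal bound) Let μ be a Borel measure on ℝⁿ, 1 < p < ∞, and Φ a Young function in B_p, i.e. ∫₁^∞ Φ(t) t^{-p-1} dt < ∞. Then the dyadic Orlicz maximal operator M_Φ^𝒟 f(x) = sup_{Q∈𝒟, x∈Q} ‖f‖_{Φ,Q} is bounded on L^p(μ): ∫ |M_Φ^𝒟 f|^p dμ ≤ C_{p,Φ} ∫ |f|^p dμ. -/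
open MeasureTheory
open scoped ENNReal NNReal

/-- Selection of a disjoint subfamily covering the union, for a nested family of cubes. -/
lemma orlicz_cube_selection {Ω : Type} {ι : Type} [MeasurableSpace Ω] (μ : Measure Ω)
    (cube : ι → Set Ω) (hpos : ∀ i, 0 < μ (cube i))
    (hnest : ∀ i j, cube i ⊆ cube j ∨ cube j ⊆ cube i ∨ Disjoint (cube i) (cube j))
    (u : Finset ι) : ∃ v ⊆ u, (⋃ i ∈ u, cube i) ⊆ (⋃ i ∈ v, cube i) ∧
      (∀ i ∈ v, ∀ j ∈ v, i ≠ j → Disjoint (cube i) (cube j)) := by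
  classical
  induction u using Finset.strongInduction with
  | _ u IH =>
    rcases u.eq_empty_or_nonempty with rfl | hne
    · exact ⟨∅, le_rfl, by simp, by simp⟩
    obtain ⟨i, hiu, hmax⟩ := Set.Finite.exists_maximalFor cube (↑u) u.finite_toSet
      (by exact_mod_cast hne)
    have hiu' : i ∈ u := hiu
    set u' := u.filter (fun j => Disjoint (cube j) (cube i)) with hu'def
    have hinotu' : i ∉ u' := by
      simp only [hu'def, Finset.mem_filter]
      rintro ⟨-, hd⟩
      have hemp : cube i = ∅ := disjoint_self.1 hd
      have h1 := hpos i
      rw [hemp] at h1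
      simp at h1
    have hss : u' ⊂ u := by
      refine Finset.ssubset_iff_of_subset (Finset.filter_subset _ _) |>.2 ⟨i, hiu', hinotu'⟩
    obtain ⟨v', hv'sub, hcov', hdisj'⟩ := IH u' hss
    refine ⟨insert i v', ?_, ?_, ?_⟩
    · exact Finset.insert_subset hiu' (hv'sub.trans (Finset.filter_subset _ _))
    · intro x hx
      rw [Set.mem_iUnion₂] at hx
      obtain ⟨j, hj, hxj⟩ := hx
      by_cases hd : Disjoint (cube j) (cube i)
      · have hj' : j ∈ u' := Finset.mem_filter.2 ⟨hj, hd⟩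
        have hx' : x ∈ ⋃ k ∈ u', cube k := Set.mem_biUnion hj' hxj
        have hx'' := hcov' hx'
        rw [Set.mem_iUnion₂] at hx''
        obtain ⟨k, hk, hxk⟩ := hx''
        exact Set.mem_biUnion (Finset.mem_insert_of_mem hk) hxk
      · have hji : cube j ⊆ cube i := by
          rcases hnest j i with h | h | h
          · exact h
          · exact hmax hj h
          · exact absurd h hd
        exact Set.mem_biUnion (Finset.mem_insert_self i v') (hji hxj)
    · intro a ha b hb hab
      rcases Finset.mem_insert.1 ha with rfl | ha' <;>
        rcases Finset.mem_insert.1 hb with rfl | hb'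
      · exact absurd rfl hab
      · exact ((Finset.mem_filter.1 (hv'sub hb')).2).symm
      · exact (Finset.mem_filter.1 (hv'sub ha')).2
      · exact hdisj' a ha' b hb' hab

/-- Main quantitative lemma: `L^p` bound for the dyadic Orlicz maximal operator, in an
abstract form where `N i` is the Orlicz norm of `f` on the cube `i`. -/
lemma orlicz_main {Ω : Type} [MeasurableSpace Ω] (p : ℝ) (hp : 1 < p) (Φ : ℝ → ℝ)
    (hcont : Continuous Φ) (hmono : MonotoneOn Φ (Set.Ici 0)) (hΦnn : ∀ t, 0 ≤ Φ t)
    (δ : ℝ) (hδ0 : 0 < δ) (hΦδ : Φ δ ≤ 1 / 2)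
    (hK : ∫⁻ s in Set.Ioi δ, ENNReal.ofReal (Φ s / s ^ (p + 1)) ≠ ⊤)
    {ι : Type} [Countable ι] [Nonempty ι]
    (μ : Measure Ω) (cube : ι → Set Ω)
    (hmeas : ∀ i, MeasurableSet (cube i)) (hpos : ∀ i, 0 < μ (cube i))
    (hfin : ∀ i, μ (cube i) < ⊤)
    (hnest : ∀ i j, cube i ⊆ cube j ∨ cube j ⊆ cube i ∨ Disjoint (cube i) (cube j))
    (f : Ω → ℝ) (hf : Measurable f) (hfint : Integrable (fun x => |f x| ^ p) μ)
    (N : ι → ℝ) (hNnn : ∀ i, 0 ≤ N i)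
    (hNbig : ∀ i, ∀ t : ℝ, 0 < t → t < N i →
      (μ (cube i)).toReal < ∫ y in cube i, Φ (|f y| / t) ∂μ) :
    ∫ x, (⨆ i : {i : ι // x ∈ cube i}, N i.1) ^ p ∂μ ≤
      (2 * p * (∫⁻ s in Set.Ioi δ, ENNReal.ofReal (Φ s / s ^ (p + 1))).toReal) *
        ∫ x, |f x| ^ p ∂μ := by
  classical
  have hp0 : (0:ℝ) < p := lt_trans one_pos hp
  set K : ℝ≥0∞ := ∫⁻ s in Set.Ioi δ, ENNReal.ofReal (Φ s / s ^ (p + 1)) with hKdef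
  set g : Ω → ℝ := fun x => ⨆ i : {i : ι // x ∈ cube i}, N i.1 with hgdef
  set V : Set Ω := ⋃ i, cube i with hVdef
  have hVmeas : MeasurableSet V := MeasurableSet.iUnion (fun i => hmeas i)
  obtain ⟨e, he⟩ := exists_surjective_nat ι
  have hgnn : ∀ x, 0 ≤ g x := fun x => Real.iSup_nonneg (fun i => hNnn i.1)
  have hgV : ∀ x, x ∉ V → g x = 0 := by
    intro x hx
    have hemp : IsEmpty {i : ι // x ∈ cube i} :=
      ⟨fun i => hx (Set.mem_iUnion.2 ⟨i.1, i.2⟩)⟩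
    rw [hgdef]
    exact Real.iSup_of_isEmpty _
  -- measurability of g
  have hgind : (fun x => ⨆ i : ι, (cube i).indicator (fun _ => N i) x) = g := by
    funext x
    show (⨆ i : ι, (cube i).indicator (fun _ => N i) x) = g x
    have hind_nn : ∀ i : ι, 0 ≤ (cube i).indicator (fun _ => N i) x :=
      fun i => Set.indicator_apply_nonneg (fun _ => hNnn i)
    rcases isEmpty_or_nonempty {i : ι // x ∈ cube i} with he' | he'
    · have h0 : ∀ i : ι, (cube i).indicator (fun _ => N i) x = 0 := by
        intro i
        have hxi : x ∉ cube i := fun hxi => he'.false ⟨i, hxi⟩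
        simp [Set.indicator_of_notMem hxi]
      simp only [h0, ciSup_const]
      rw [hgdef]
      exact (Real.iSup_of_isEmpty _).symm
    · by_cases hb : BddAbove (Set.range fun i : ι => (cube i).indicator (fun _ => N i) x)
      · apply le_antisymm
        · apply Real.iSup_le _ (hgnn x)
          intro i
          show (cube i).indicator (fun _ => N i) x ≤ g x
          by_cases hxi : x ∈ cube i
          · rw [Set.indicator_of_mem hxi]
            have hbs : BddAbove (Set.range fun j : {i : ι // x ∈ cube i} => N j.1) := by
              obtain ⟨M, hM⟩ := hb
              refine ⟨M, ?_⟩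
              rintro y ⟨j, rfl⟩
              have := hM (Set.mem_range_self j.1)
              rwa [Set.indicator_of_mem j.2] at this
            exact le_ciSup hbs (⟨i, hxi⟩ : {i : ι // x ∈ cube i})
          · rw [Set.indicator_of_notMem hxi]
            exact hgnn x
        · show g x ≤ _
          rw [hgdef]
          apply Real.iSup_le _ (Real.iSup_nonneg hind_nn)
          intro j
          have hj : N j.1 = (cube j.1).indicator (fun _ => N j.1) x :=
            (Set.indicator_of_mem j.2 (fun _ => N j.1)).symm
          rw [hj]
          exact le_ciSup hb j.1
      · have hbs : ¬ BddAbove (Set.range fun j : {i : ι // x ∈ cube i} => N j.1) := by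
          rintro ⟨M, hM⟩
          apply hb
          refine ⟨max M 0, ?_⟩
          rintro y ⟨i, rfl⟩
          show (cube i).indicator (fun _ => N i) x ≤ max M 0
          by_cases hxi : x ∈ cube i
          · rw [Set.indicator_of_mem hxi]
            exact le_max_of_le_left (hM ⟨⟨i, hxi⟩, rfl⟩)
          · rw [Set.indicator_of_notMem hxi]
            exact le_max_right _ _
        rw [Real.iSup_of_not_bddAbove hb]
        exact (Real.iSup_of_not_bddAbove hbs).symm
  have hgmeas : Measurable g := by
    rw [← hgind]
    exact Measurable.iSup (fun i => measurable_const.indicator (hmeas i))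
  -- the super-level sets
  set D : ℝ → Set Ω := fun t => {x | t * δ < |f x|} with hDdef
  have hDmeas : ∀ t, MeasurableSet (D t) := fun t => measurableSet_lt measurable_const hf.abs
  -- per-cube bound
  have cube_bound : ∀ i, ∀ t : ℝ, 0 < t → t < N i →
      μ (cube i) ≤ 2 * ∫⁻ y in cube i ∩ D t, ENNReal.ofReal (Φ (|f y| / t)) ∂μ := by
    intro i t ht htN
    have h1 : (μ (cube i)).toReal < ∫ y in cube i, Φ (|f y| / t) ∂μ := hNbig i t ht htN
    have hint : IntegrableOn (fun y => Φ (|f y| / t)) (cube i) μ := by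
      by_contra hcon
      rw [integral_undef hcon] at h1
      exact absurd h1 (not_lt.2 ENNReal.toReal_nonneg)
    have h2 : ∫⁻ y in cube i, ENNReal.ofReal (Φ (|f y| / t)) ∂μ
        = ENNReal.ofReal (∫ y in cube i, Φ (|f y| / t) ∂μ) :=
      (ofReal_integral_eq_lintegral_ofReal hint
        (Filter.Eventually.of_forall fun y => hΦnn _)).symm
    have h3 : μ (cube i) < ∫⁻ y in cube i, ENNReal.ofReal (Φ (|f y| / t)) ∂μ := by
      rw [h2]
      calc μ (cube i) = ENNReal.ofReal ((μ (cube i)).toReal) :=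
            (ENNReal.ofReal_toReal (hfin i).ne).symm
        _ < ENNReal.ofReal (∫ y in cube i, Φ (|f y| / t) ∂μ) :=
            (ENNReal.ofReal_lt_ofReal_iff_of_nonneg ENNReal.toReal_nonneg).2 h1
    have hsmall : ∫⁻ y in cube i \ D t, ENNReal.ofReal (Φ (|f y| / t)) ∂μ
        ≤ 2⁻¹ * μ (cube i) := by
      have hb : ∀ y ∈ cube i \ D t, ENNReal.ofReal (Φ (|f y| / t)) ≤ 2⁻¹ := by
        intro y hy
        have hy2 : ¬ (t * δ < |f y|) := hy.2
        have h4 : |f y| / t ≤ δ := by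
          rw [div_le_iff₀ ht]
          have := not_lt.1 hy2
          linarith
        have h5 : Φ (|f y| / t) ≤ 1 / 2 :=
          le_trans (hmono (Set.mem_Ici.2 (by positivity)) (Set.mem_Ici.2 hδ0.le) h4) hΦδ
        calc ENNReal.ofReal (Φ (|f y| / t)) ≤ ENNReal.ofReal (1 / 2) :=
              ENNReal.ofReal_le_ofReal h5
          _ = 2⁻¹ := by
              rw [show (1 / 2 : ℝ) = (2 : ℝ)⁻¹ by norm_num,
                ENNReal.ofReal_inv_of_pos two_pos, ENNReal.ofReal_ofNat]
      calc ∫⁻ y in cube i \ D t, ENNReal.ofReal (Φ (|f y| / t)) ∂μ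
          ≤ ∫⁻ _ in cube i \ D t, 2⁻¹ ∂μ := setLIntegral_mono' ((hmeas i).diff (hDmeas t)) hb
        _ = 2⁻¹ * μ (cube i \ D t) := setLIntegral_const _ _
        _ ≤ 2⁻¹ * μ (cube i) := mul_le_mul_right (measure_mono Set.diff_subset) _
    have hsplit := lintegral_inter_add_diff (fun y => ENNReal.ofReal (Φ (|f y| / t)))
      (cube i) (hDmeas t) (μ := μ)
    have h6 : μ (cube i) < (∫⁻ y in cube i ∩ D t, ENNReal.ofReal (Φ (|f y| / t)) ∂μ)
        + 2⁻¹ * μ (cube i) := by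
      calc μ (cube i) < ∫⁻ y in cube i, ENNReal.ofReal (Φ (|f y| / t)) ∂μ := h3
        _ = (∫⁻ y in cube i ∩ D t, ENNReal.ofReal (Φ (|f y| / t)) ∂μ)
            + ∫⁻ y in cube i \ D t, ENNReal.ofReal (Φ (|f y| / t)) ∂μ := hsplit.symm
        _ ≤ _ := add_le_add le_rfl hsmall
    have h7 : 2⁻¹ * μ (cube i) < ∫⁻ y in cube i ∩ D t, ENNReal.ofReal (Φ (|f y| / t)) ∂μ := by
      by_contra hcon
      push_neg at hcon
      have hcontra := calc μ (cube i)
          < (∫⁻ y in cube i ∩ D t, ENNReal.ofReal (Φ (|f y| / t)) ∂μ) + 2⁻¹ * μ (cube i) := h6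
        _ ≤ 2⁻¹ * μ (cube i) + 2⁻¹ * μ (cube i) := add_le_add_left hcon _
        _ = μ (cube i) := by rw [← add_mul, ENNReal.inv_two_add_inv_two, one_mul]
      exact lt_irrefl _ hcontra
    calc μ (cube i) = 2 * (2⁻¹ * μ (cube i)) := by
          rw [← mul_assoc, ENNReal.mul_inv_cancel two_ne_zero ENNReal.ofNat_ne_top, one_mul]
      _ ≤ 2 * ∫⁻ y in cube i ∩ D t, ENNReal.ofReal (Φ (|f y| / t)) ∂μ :=
          mul_le_mul_right h7.le _
  -- distribution inequality
  have distrib : ∀ t : ℝ, 0 < t →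
      μ {x | t < g x} ≤ 2 * ∫⁻ x in V ∩ D t, ENNReal.ofReal (Φ (|f x| / t)) ∂μ := by
    intro t ht
    set T : Set ι := {i : ι | t < N i} with hTdef
    have hsub : {x | t < g x} ⊆ ⋃ i ∈ T, cube i := by
      intro x hx
      have hx' : t < ⨆ i : {i : ι // x ∈ cube i}, N i.1 := hx
      have hne : Nonempty {i : ι // x ∈ cube i} := by
        by_contra hcon
        rw [not_nonempty_iff] at hcon
        rw [Real.iSup_of_isEmpty] at hx'
        exact absurd hx' (not_lt.2 ht.le)
      obtain ⟨j, hj⟩ := exists_lt_of_lt_ciSup hx'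
      exact Set.mem_biUnion (show j.1 ∈ T from hj) j.2
    set A : ℕ → Set Ω := fun k => if e k ∈ T then cube (e k) else ∅ with hAdef
    have hUnion : (⋃ i ∈ T, cube i) = ⋃ k : ℕ, A k := by
      ext x
      simp only [Set.mem_iUnion, hAdef]
      constructor
      · rintro ⟨i, hi, hxi⟩
        obtain ⟨k, rfl⟩ := he i
        exact ⟨k, by rw [if_pos hi]; exact hxi⟩
      · rintro ⟨k, hk⟩
        by_cases h : e k ∈ T
        · rw [if_pos h] at hk; exact ⟨e k, h, hk⟩
        · rw [if_neg h] at hk; exact absurd hk (Set.notMem_empty x)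
    have hfinb : ∀ u : Finset ι, (∀ i ∈ u, i ∈ T) →
        μ (⋃ i ∈ u, cube i) ≤ 2 * ∫⁻ x in V ∩ D t, ENNReal.ofReal (Φ (|f x| / t)) ∂μ := by
      intro u hu
      obtain ⟨v, hvu, hcov, hdisj⟩ := orlicz_cube_selection μ cube hpos hnest u
      have hpd : Set.PairwiseDisjoint (↑v) (fun i => cube i ∩ D t) := by
        intro a ha b hb hab
        exact Disjoint.mono Set.inter_subset_left Set.inter_subset_left
          (hdisj a ha b hb hab)
      calc μ (⋃ i ∈ u, cube i) ≤ μ (⋃ i ∈ v, cube i) := measure_mono hcov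
        _ ≤ ∑ i ∈ v, μ (cube i) := measure_biUnion_finset_le v cube
        _ ≤ ∑ i ∈ v, 2 * ∫⁻ y in cube i ∩ D t, ENNReal.ofReal (Φ (|f y| / t)) ∂μ :=
            Finset.sum_le_sum fun i hi => cube_bound i t ht (hu i (hvu hi))
        _ = 2 * ∑ i ∈ v, ∫⁻ y in cube i ∩ D t, ENNReal.ofReal (Φ (|f y| / t)) ∂μ := by
            rw [Finset.mul_sum]
        _ = 2 * ∫⁻ y in ⋃ i ∈ v, (cube i ∩ D t), ENNReal.ofReal (Φ (|f y| / t)) ∂μ := by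
            rw [lintegral_biUnion_finset hpd (fun i _ => (hmeas i).inter (hDmeas t))]
        _ ≤ 2 * ∫⁻ x in V ∩ D t, ENNReal.ofReal (Φ (|f x| / t)) ∂μ := by
            refine mul_le_mul_right (lintegral_mono_set ?_) _
            refine Set.iUnion₂_subset fun i _ => Set.inter_subset_inter_left _ ?_
            exact Set.subset_iUnion cube i
    have haccb : ∀ n : ℕ, μ (Set.accumulate A n)
        ≤ 2 * ∫⁻ x in V ∩ D t, ENNReal.ofReal (Φ (|f x| / t)) ∂μ := by
      intro n
      have hsub2 : Set.accumulate A n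
          ⊆ ⋃ i ∈ ((Finset.range (n+1)).image e).filter (· ∈ T), cube i := by
        intro x hx
        rw [Set.mem_accumulate] at hx
        obtain ⟨k, hkn, hk⟩ := hx
        by_cases h : e k ∈ T
        · rw [hAdef] at hk
          simp only [if_pos h] at hk
          refine Set.mem_biUnion ?_ hk
          refine Finset.mem_filter.2 ⟨?_, h⟩
          exact Finset.mem_image.2 ⟨k, Finset.mem_range.2 (by omega), rfl⟩
        · rw [hAdef] at hk
          simp only [if_neg h] at hk
          exact absurd hk (Set.notMem_empty x)
      refine le_trans (measure_mono hsub2) (hfinb _ ?_)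
      intro i hi
      exact (Finset.mem_filter.1 hi).2
    calc μ {x | t < g x} ≤ μ (⋃ i ∈ T, cube i) := measure_mono hsub
      _ = μ (⋃ k, A k) := by rw [hUnion]
      _ = ⨆ n, μ (Set.accumulate A n) := measure_iUnion_eq_iSup_accumulate
      _ ≤ 2 * ∫⁻ x in V ∩ D t, ENNReal.ofReal (Φ (|f x| / t)) ∂μ := iSup_le haccb

  -- sigma-finiteness of the restricted measure
  set muV := μ.restrict V with hmuV
  have hsf : SigmaFinite muV := by
    apply Measure.sigmaFinite_of_countable
      (Set.countable_range (fun k : ℕ => cube (e k) ∪ Vᶜ))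
    · rintro s ⟨k, rfl⟩
      have h2 : muV (cube (e k)) ≤ μ (cube (e k)) := by
        rw [hmuV, Measure.restrict_apply (hmeas _)]
        exact measure_mono Set.inter_subset_left
      have h3 : muV Vᶜ = 0 := by
        rw [hmuV, Measure.restrict_apply hVmeas.compl, Set.compl_inter_self]
        exact measure_empty
      calc muV (cube (e k) ∪ Vᶜ) ≤ muV (cube (e k)) + muV Vᶜ := measure_union_le _ _
        _ ≤ μ (cube (e k)) + 0 := add_le_add h2 h3.le
        _ < ⊤ := by simpa using hfin (e k)
    · apply Set.eq_univ_of_forall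
      intro x
      rw [Set.mem_sUnion]
      by_cases hx : x ∈ V
      · rw [hVdef] at hx
        obtain ⟨s, ⟨i, rfl⟩, hxi⟩ := hx
        obtain ⟨k, rfl⟩ := he i
        exact ⟨cube (e k) ∪ Vᶜ, ⟨k, rfl⟩, Or.inl hxi⟩
      · exact ⟨cube (e 0) ∪ Vᶜ, ⟨0, rfl⟩, Or.inr hx⟩
  haveI := hsf
  -- layer cake
  have hprim : ∀ b : ℝ, 0 ≤ b → ∫ t in (0:ℝ)..b, p * t ^ (p - 1) = b ^ p := by
    intro b hb
    rw [intervalIntegral.integral_const_mul, integral_rpow (Or.inl (by linarith))]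
    have hpe : p - 1 + 1 = p := by ring
    rw [hpe, Real.zero_rpow hp0.ne']
    field_simp
    rw [sub_zero]
  have hgp_nn : (0:ℝ≥0∞) ≤ 0 := le_rfl
  have layer : ∫⁻ x, ENNReal.ofReal (g x ^ p) ∂muV =
      ∫⁻ t in Set.Ioi 0, muV {a | t < g a} * ENNReal.ofReal (p * t ^ (p - 1)) := by
    have lc := lintegral_comp_eq_lintegral_meas_lt_mul muV
      (Filter.Eventually.of_forall hgnn) hgmeas.aemeasurable
      (fun t _ => (intervalIntegral.intervalIntegrable_rpow'
        (by linarith : (-1:ℝ) < p - 1)).const_mul p)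
      (by
        filter_upwards [ae_restrict_mem measurableSet_Ioi] with t ht
        rw [Set.mem_Ioi] at ht
        positivity)
    rw [← lc]
    apply lintegral_congr
    intro x
    rw [hprim (g x) (hgnn x)]
  -- per-t bound on the restricted measure
  have perT : ∀ t ∈ Set.Ioi (0:ℝ),
      muV {a | t < g a} * ENNReal.ofReal (p * t ^ (p - 1))
      ≤ (2 * ENNReal.ofReal p) *
        ((∫⁻ x in D t, ENNReal.ofReal (Φ (|f x| / t)) ∂muV) * ENNReal.ofReal (t ^ (p - 1))) := by
    intro t ht
    rw [Set.mem_Ioi] at ht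
    have h1 : muV {a | t < g a} ≤ 2 * ∫⁻ x in D t, ENNReal.ofReal (Φ (|f x| / t)) ∂muV := by
      calc muV {a | t < g a} ≤ μ {a | t < g a} := by
            rw [hmuV, Measure.restrict_apply (measurableSet_lt measurable_const hgmeas)]
            exact measure_mono Set.inter_subset_left
        _ ≤ 2 * ∫⁻ x in V ∩ D t, ENNReal.ofReal (Φ (|f x| / t)) ∂μ := distrib t ht
        _ = 2 * ∫⁻ x in D t, ENNReal.ofReal (Φ (|f x| / t)) ∂muV := by
            rw [hmuV, Measure.restrict_restrict (hDmeas t), Set.inter_comm]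
    have h2 : ENNReal.ofReal (p * t ^ (p - 1))
        = ENNReal.ofReal p * ENNReal.ofReal (t ^ (p - 1)) := ENNReal.ofReal_mul hp0.le
    calc muV {a | t < g a} * ENNReal.ofReal (p * t ^ (p - 1))
        ≤ (2 * ∫⁻ x in D t, ENNReal.ofReal (Φ (|f x| / t)) ∂muV) *
          (ENNReal.ofReal p * ENNReal.ofReal (t ^ (p - 1))) := by
          rw [← h2]; exact mul_le_mul_left h1 _
      _ = (2 * ENNReal.ofReal p) *
          ((∫⁻ x in D t, ENNReal.ofReal (Φ (|f x| / t)) ∂muV) * ENNReal.ofReal (t ^ (p - 1))) := by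
          ring
  have step1 : ∫⁻ x, ENNReal.ofReal (g x ^ p) ∂muV ≤
      (2 * ENNReal.ofReal p) * ∫⁻ t in Set.Ioi 0,
        (∫⁻ x in D t, ENNReal.ofReal (Φ (|f x| / t)) ∂muV) * ENNReal.ofReal (t ^ (p - 1)) := by
    rw [layer, ← lintegral_const_mul' _ _
      (by exact ENNReal.mul_ne_top (by norm_num) ENNReal.ofReal_ne_top)]
    refine lintegral_mono_ae ?_
    filter_upwards [ae_restrict_mem measurableSet_Ioi] with t ht
    exact perT t ht
  -- the integrand for Fubini
  set H : ℝ → Ω → ℝ≥0∞ := fun t x =>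
    (if t * δ < |f x| then ENNReal.ofReal (Φ (|f x| / t)) else 0) * ENNReal.ofReal (t ^ (p - 1))
    with hHdef
  have hIH : ∀ t : ℝ,
      (∫⁻ x in D t, ENNReal.ofReal (Φ (|f x| / t)) ∂muV) * ENNReal.ofReal (t ^ (p - 1))
      = ∫⁻ x, H t x ∂muV := by
    intro t
    rw [← lintegral_indicator (hDmeas t), ← lintegral_mul_const' _ _ ENNReal.ofReal_ne_top]
    apply lintegral_congr
    intro x
    simp only [hHdef, hDdef, Set.indicator_apply, Set.mem_setOf_eq]
  have hHmeas : Measurable (Function.uncurry H) := by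
    apply Measurable.mul
    · apply Measurable.ite
      · exact measurableSet_lt (measurable_fst.mul_const δ) ((hf.comp measurable_snd).abs)
      · exact ENNReal.measurable_ofReal.comp
          (hcont.measurable.comp (((hf.comp measurable_snd).abs).div measurable_fst))
      · exact measurable_const
    · exact ENNReal.measurable_ofReal.comp
        ((Real.continuous_rpow_const (by linarith : (0:ℝ) ≤ p - 1)).measurable.comp measurable_fst)
  have hswap : ∫⁻ t in Set.Ioi (0:ℝ), ∫⁻ x, H t x ∂muV
      = ∫⁻ x, (∫⁻ t in Set.Ioi (0:ℝ), H t x) ∂muV :=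
    lintegral_lintegral_swap (hHmeas.aemeasurable)
  -- inner integral: change of variables
  have inner : ∀ x, (∫⁻ t in Set.Ioi (0:ℝ), H t x) = ENNReal.ofReal (|f x| ^ p) * K := by
    intro x
    set a := |f x| with ha
    have ha0 : 0 ≤ a := abs_nonneg _
    rcases eq_or_lt_of_le ha0 with ha0' | ha0'
    · have hz : ∀ t ∈ Set.Ioi (0:ℝ), H t x = 0 := by
        intro t ht
        rw [Set.mem_Ioi] at ht
        rw [hHdef]
        have hnlt : ¬ (t * δ < |f x|) := by
          rw [← ha, ← ha0']
          exact not_lt.2 (by positivity)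
        simp only [if_neg hnlt, zero_mul]
      rw [setLIntegral_congr_fun measurableSet_Ioi hz,
        lintegral_zero, ← ha0', Real.zero_rpow hp0.ne', ENNReal.ofReal_zero, zero_mul]
    · -- a > 0
      have him : (fun s => a / s) '' Set.Ioi δ = Set.Ioo 0 (a / δ) := by
        ext t
        constructor
        · rintro ⟨s, hs, rfl⟩
          rw [Set.mem_Ioi] at hs
          have hs0 : 0 < s := lt_trans hδ0 hs
          exact ⟨by positivity, div_lt_div_of_pos_left ha0' hδ0 hs⟩
        · rintro ⟨ht0, hta⟩
          refine ⟨a / t, ?_, ?_⟩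
          · rw [Set.mem_Ioi, lt_div_iff₀ ht0]
            have h1 := (lt_div_iff₀ hδ0).1 hta
            linarith
          · field_simp
      have hderiv : ∀ s ∈ Set.Ioi δ,
          HasDerivWithinAt (fun s => a / s) (-(a / s ^ 2)) (Set.Ioi δ) s := by
        intro s hs
        rw [Set.mem_Ioi] at hs
        have hs0 : s ≠ 0 := (lt_trans hδ0 hs).ne'
        have h1 : HasDerivAt (fun y : ℝ => a * y⁻¹) (a * (-(s ^ 2)⁻¹)) s :=
          (hasDerivAt_inv hs0).const_mul a
        have h2 : a * (-(s ^ 2)⁻¹) = -(a / s ^ 2) := by field_simp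
        have h3 : (fun y : ℝ => a * y⁻¹) = fun y : ℝ => a / y := by
          funext y; rw [div_eq_mul_inv]
        rw [h2, h3] at h1
        exact h1.hasDerivWithinAt
      have hinj : Set.InjOn (fun s => a / s) (Set.Ioi δ) := by
        intro s1 h1 s2 h2 heq
        rw [Set.mem_Ioi] at h1 h2
        have hs1 : s1 ≠ 0 := (lt_trans hδ0 h1).ne'
        have hs2 : s2 ≠ 0 := (lt_trans hδ0 h2).ne'
        simp only [] at heq
        have e1 : a / (a / s1) = s1 := by field_simp
        have e2 : a / (a / s2) = s2 := by field_simp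
        calc s1 = a / (a / s1) := e1.symm
          _ = a / (a / s2) := by rw [heq]
          _ = s2 := e2
      have hres : (∫⁻ t in Set.Ioi (0:ℝ), H t x)
          = ∫⁻ t in Set.Ioo 0 (a / δ),
              ENNReal.ofReal (Φ (a / t)) * ENNReal.ofReal (t ^ (p - 1)) := by
        have hcong : ∀ t ∈ Set.Ioi (0:ℝ), H t x =
            (Set.Ioo 0 (a / δ)).indicator
              (fun t => ENNReal.ofReal (Φ (a / t)) * ENNReal.ofReal (t ^ (p - 1))) t := by
          intro t ht
          rw [Set.mem_Ioi] at ht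
          simp only [hHdef, Set.indicator_apply, ← ha]
          by_cases hlt : t * δ < a
          · rw [if_pos hlt, if_pos (Set.mem_Ioo.2 ⟨ht, (lt_div_iff₀ hδ0).2 hlt⟩)]
          · rw [if_neg hlt, zero_mul,
              if_neg (fun hmem => hlt ((lt_div_iff₀ hδ0).1 (Set.mem_Ioo.1 hmem).2))]
        rw [setLIntegral_congr_fun measurableSet_Ioi hcong,
          lintegral_indicator measurableSet_Ioo, Measure.restrict_restrict measurableSet_Ioo,
          Set.inter_eq_self_of_subset_left Set.Ioo_subset_Ioi_self]
      have hchg : (∫⁻ t in Set.Ioo 0 (a / δ),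
            ENNReal.ofReal (Φ (a / t)) * ENNReal.ofReal (t ^ (p - 1)))
          = ∫⁻ s in Set.Ioi δ, ENNReal.ofReal |(-(a / s ^ 2))| *
              (ENNReal.ofReal (Φ (a / (a / s))) * ENNReal.ofReal ((a / s) ^ (p - 1))) := by
        rw [← him]
        have hcv := lintegral_image_eq_lintegral_abs_det_fderiv_mul volume measurableSet_Ioi
          (fun s hs => ((hderiv s hs).hasFDerivWithinAt)) hinj
          (fun t => ENNReal.ofReal (Φ (a / t)) * ENNReal.ofReal (t ^ (p - 1)))
        simpa [ContinuousLinearMap.det_toSpanSingleton] using hcv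
      have hpt : ∀ s ∈ Set.Ioi δ, ENNReal.ofReal |(-(a / s ^ 2))| *
            (ENNReal.ofReal (Φ (a / (a / s))) * ENNReal.ofReal ((a / s) ^ (p - 1)))
          = ENNReal.ofReal (a ^ p) * ENNReal.ofReal (Φ s / s ^ (p + 1)) := by
        intro s hs
        rw [Set.mem_Ioi] at hs
        have hs0 : 0 < s := lt_trans hδ0 hs
        have h1 : a / (a / s) = s := by field_simp
        rw [h1, abs_neg, abs_of_nonneg (div_nonneg ha0 (by positivity))]
        rw [← ENNReal.ofReal_mul (hΦnn s), ← ENNReal.ofReal_mul (div_nonneg ha0 (by positivity)),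
          ← ENNReal.ofReal_mul (Real.rpow_nonneg ha0 p)]
        congr 1
        have e1 : a * a ^ (p - 1) = a ^ p := by
          have h := Real.rpow_add ha0' 1 (p - 1)
          rw [Real.rpow_one, show (1:ℝ) + (p - 1) = p by ring] at h
          exact h.symm
        have e2 : (s ^ (2:ℕ) : ℝ) * s ^ (p - 1) = s ^ (p + 1) := by
          have h := Real.rpow_add hs0 2 (p - 1)
          rw [show (2:ℝ) + (p - 1) = p + 1 by ring] at h
          rw [h, show ((2:ℝ)) = ((2:ℕ):ℝ) by norm_num, Real.rpow_natCast]
        have hps : (a / s) ^ (p - 1) = a ^ (p - 1) / s ^ (p - 1) := Real.div_rpow ha0 hs0.le (p - 1)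
        calc a / s ^ 2 * (Φ s * ((a / s) ^ (p - 1)))
            = a / s ^ 2 * (Φ s * (a ^ (p - 1) / s ^ (p - 1))) := by rw [hps]
          _ = (a * a ^ (p - 1)) * Φ s / (s ^ 2 * s ^ (p - 1)) := by ring
          _ = a ^ p * Φ s / s ^ (p + 1) := by rw [e1, e2]
          _ = a ^ p * (Φ s / s ^ (p + 1)) := by ring
      have hfinal : (∫⁻ s in Set.Ioi δ, ENNReal.ofReal |(-(a / s ^ 2))| *
            (ENNReal.ofReal (Φ (a / (a / s))) * ENNReal.ofReal ((a / s) ^ (p - 1))))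
          = ENNReal.ofReal (a ^ p) * K := by
        rw [setLIntegral_congr_fun measurableSet_Ioi hpt,
          hKdef, lintegral_const_mul' _ _ ENNReal.ofReal_ne_top]
      rw [hres, hchg, hfinal, ha]
  -- assemble
  have R_eq : ∫⁻ x, ENNReal.ofReal (|f x| ^ p) ∂μ = ENNReal.ofReal (∫ x, |f x| ^ p ∂μ) :=
    (ofReal_integral_eq_lintegral_ofReal hfint
      (Filter.Eventually.of_forall fun x => Real.rpow_nonneg (abs_nonneg _) p)).symm
  have main : ∫⁻ x, ENNReal.ofReal (g x ^ p) ∂muV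
      ≤ 2 * ENNReal.ofReal p * (K * ENNReal.ofReal (∫ x, |f x| ^ p ∂μ)) := by
    calc ∫⁻ x, ENNReal.ofReal (g x ^ p) ∂muV
        ≤ (2 * ENNReal.ofReal p) * ∫⁻ t in Set.Ioi 0,
            (∫⁻ x in D t, ENNReal.ofReal (Φ (|f x| / t)) ∂muV) * ENNReal.ofReal (t ^ (p - 1)) :=
          step1
      _ = (2 * ENNReal.ofReal p) * ∫⁻ t in Set.Ioi 0, ∫⁻ x, H t x ∂muV := by
          congr 1
          exact lintegral_congr hIH
      _ = (2 * ENNReal.ofReal p) * ∫⁻ x, (∫⁻ t in Set.Ioi (0:ℝ), H t x) ∂muV := by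
          rw [hswap]
      _ = (2 * ENNReal.ofReal p) * ∫⁻ x, ENNReal.ofReal (|f x| ^ p) * K ∂muV := by
          congr 1
          exact lintegral_congr inner
      _ = (2 * ENNReal.ofReal p) * (K * ∫⁻ x, ENNReal.ofReal (|f x| ^ p) ∂muV) := by
          rw [lintegral_mul_const' K _ hK, mul_comm _ K]
      _ ≤ (2 * ENNReal.ofReal p) * (K * ∫⁻ x, ENNReal.ofReal (|f x| ^ p) ∂μ) := by
          refine mul_le_mul_right (mul_le_mul_right ?_ _) _
          exact lintegral_mono' Measure.restrict_le_self le_rfl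
      _ = 2 * ENNReal.ofReal p * (K * ENNReal.ofReal (∫ x, |f x| ^ p ∂μ)) := by
          rw [R_eq]
  have hM : 2 * ENNReal.ofReal p * (K * ENNReal.ofReal (∫ x, |f x| ^ p ∂μ)) ≠ ⊤ := by
    apply ENNReal.mul_ne_top
    · exact ENNReal.mul_ne_top (by norm_num) ENNReal.ofReal_ne_top
    · exact ENNReal.mul_ne_top hK ENNReal.ofReal_ne_top
  have lhs_eq : ∫ x, g x ^ p ∂μ = (∫⁻ x, ENNReal.ofReal (g x ^ p) ∂muV).toReal := by
    have h1 : ∫ x, g x ^ p ∂μ = ∫ x, g x ^ p ∂muV := by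
      rw [hmuV, ← integral_indicator hVmeas]
      apply integral_congr_ae
      apply Filter.Eventually.of_forall
      intro x
      by_cases hx : x ∈ V
      · rw [Set.indicator_of_mem hx]
      · rw [Set.indicator_of_notMem hx]
        show g x ^ p = 0
        rw [hgV x hx, Real.zero_rpow hp0.ne']
    rw [h1]
    exact integral_eq_lintegral_of_nonneg_ae
      (Filter.Eventually.of_forall fun x => Real.rpow_nonneg (hgnn x) p)
      (((Real.continuous_rpow_const hp0.le).measurable.comp hgmeas).aestronglyMeasurable)
  show ∫ x, g x ^ p ∂μ ≤ 2 * p * K.toReal * ∫ x, |f x| ^ p ∂μ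
  rw [lhs_eq]
  calc (∫⁻ x, ENNReal.ofReal (g x ^ p) ∂muV).toReal
      ≤ (2 * ENNReal.ofReal p * (K * ENNReal.ofReal (∫ x, |f x| ^ p ∂μ))).toReal :=
        ENNReal.toReal_mono hM main
    _ = 2 * p * K.toReal * ∫ x, |f x| ^ p ∂μ := by
        rw [ENNReal.toReal_mul, ENNReal.toReal_mul, ENNReal.toReal_mul,
          ENNReal.toReal_ofNat, ENNReal.toReal_ofReal hp0.le,
          ENNReal.toReal_ofReal (integral_nonneg fun x => Real.rpow_nonneg (abs_nonneg _) p)]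
        ring

/-- Boundedness of the dyadic Orlicz maximal operator on `L^p(μ)` for a Young function
`Φ ∈ B_p`: there is a constant `C = C_{p,Φ}` such that for any Borel measure and dyadic
lattice, `∫ (M_Φ^𝒟 f)^p dμ ≤ C ∫ |f|^p dμ`, where
`M_Φ^𝒟 f(x) = sup_{x ∈ Q ∈ 𝒟} ‖f‖_{Φ,Q}` and
`‖f‖_{Φ,Q} = inf{λ > 0 : μ(Q)^{-1} ∫_Q Φ(|f|/λ) dμ ≤ 1}`. -/
theorem stmt15 (p : ℝ) (hp : 1 < p) (Φ : ℝ → ℝ)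
    (hconv : ConvexOn ℝ (Set.Ici 0) Φ) (hcont : Continuous Φ)
    (hmono : MonotoneOn Φ (Set.Ici 0)) (h0 : Φ 0 = 0)
    (hΦnn : ∀ t, 0 ≤ Φ t)
    (hinfty : Filter.Tendsto (fun t => Φ t / t) Filter.atTop Filter.atTop)
    (hBp : IntegrableOn (fun t => Φ t / t ^ (p + 1)) (Set.Ioi (1 : ℝ)) volume) :
    ∃ C : ℝ, 0 < C ∧
    ∀ (n : ℕ) (ι : Type) [Countable ι]
      (μ : Measure (EuclideanSpace ℝ (Fin n)))
      (cube : ι → Set (EuclideanSpace ℝ (Fin n)))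
      (_ : ∀ i, MeasurableSet (cube i))
      (_ : ∀ i, 0 < μ (cube i)) (_ : ∀ i, μ (cube i) < ⊤)
      (_ : ∀ i j, cube i ⊆ cube j ∨ cube j ⊆ cube i ∨ Disjoint (cube i) (cube j))
      (f : EuclideanSpace ℝ (Fin n) → ℝ) (_ : Measurable f)
      (_ : Integrable (fun x => |f x| ^ p) μ),
      ∫ x, (⨆ i : {i : ι // x ∈ cube i},
          sInf {lam : ℝ | 0 < lam ∧
            (μ (cube i.1)).toReal⁻¹ * ∫ y in cube i.1, Φ (|f y| / lam) ∂μ ≤ 1}) ^ p ∂μ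
        ≤ C * ∫ x, |f x| ^ p ∂μ := by
  classical
  have hp0 : (0:ℝ) < p := lt_trans one_pos hp
  -- choose δ with Φ δ ≤ 1/2
  obtain ⟨d, hd0, hball⟩ := Metric.continuousAt_iff.1 hcont.continuousAt (1/2) (by norm_num)
  set δ : ℝ := min (d / 2) 1 with hδdef
  have hδ0 : 0 < δ := lt_min (by linarith) one_pos
  have hδ1 : δ ≤ 1 := min_le_right _ _
  have hΦδ : Φ δ ≤ 1 / 2 := by
    have hdist : dist δ 0 < d := by
      rw [Real.dist_eq, sub_zero, abs_of_pos hδ0]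
      calc δ ≤ d / 2 := min_le_left _ _
        _ < d := by linarith
    have := hball hdist
    rw [Real.dist_eq, h0, sub_zero] at this
    calc Φ δ ≤ |Φ δ| := le_abs_self _
      _ ≤ 1 / 2 := this.le
  -- finiteness of the constant
  have hintOn : IntegrableOn (fun s => Φ s / s ^ (p + 1)) (Set.Ioi δ) volume := by
    have h1 : IntegrableOn (fun s => Φ s / s ^ (p + 1)) (Set.Ioc δ 1) volume := by
      apply (ContinuousOn.integrableOn_compact isCompact_Icc ?_).mono_set Set.Ioc_subset_Icc_self
      apply ContinuousOn.div hcont.continuousOn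
        (Real.continuous_rpow_const (by linarith)).continuousOn
      intro s hs
      exact (Real.rpow_pos_of_pos (lt_of_lt_of_le hδ0 hs.1) _).ne'
    have h2 := h1.union hBp
    rwa [Set.Ioc_union_Ioi_eq_Ioi hδ1] at h2
  have hKne : (∫⁻ s in Set.Ioi δ, ENNReal.ofReal (Φ s / s ^ (p + 1))) ≠ ⊤ := by
    rw [← ofReal_integral_eq_lintegral_ofReal hintOn ?_]
    · exact ENNReal.ofReal_ne_top
    · filter_upwards [ae_restrict_mem measurableSet_Ioi] with s hs
      rw [Set.mem_Ioi] at hs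
      have hs0 : 0 < s := lt_trans hδ0 hs
      exact div_nonneg (hΦnn s) (Real.rpow_nonneg hs0.le _)
  set K : ℝ≥0∞ := ∫⁻ s in Set.Ioi δ, ENNReal.ofReal (Φ s / s ^ (p + 1)) with hKdef
  have hCnn : 0 ≤ 2 * p * K.toReal := by
    have h1 : (0:ℝ) ≤ K.toReal := ENNReal.toReal_nonneg
    nlinarith
  refine ⟨2 * p * K.toReal + 1, by linarith, ?_⟩
  intro n ι _ μ cube hcube hpos hfin hnest f hf hfint
  have hRHSnn : 0 ≤ ∫ x, |f x| ^ p ∂μ :=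
    integral_nonneg fun x => Real.rpow_nonneg (abs_nonneg _) p
  rcases isEmpty_or_nonempty ι with hemp | hne
  · have hz : ∀ x : EuclideanSpace ℝ (Fin n), (⨆ i : {i : ι // x ∈ cube i},
        sInf {lam : ℝ | 0 < lam ∧
          (μ (cube i.1)).toReal⁻¹ * ∫ y in cube i.1, Φ (|f y| / lam) ∂μ ≤ 1}) = 0 := by
      intro x
      haveI : IsEmpty {i : ι // x ∈ cube i} := ⟨fun i => hemp.false i.1⟩
      exact Real.iSup_of_isEmpty _
    simp only [hz, Real.zero_rpow hp0.ne', integral_zero]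
    positivity
  · set N : ι → ℝ := fun i => sInf {lam : ℝ | 0 < lam ∧
      (μ (cube i)).toReal⁻¹ * ∫ y in cube i, Φ (|f y| / lam) ∂μ ≤ 1} with hNdef
    have hNnn : ∀ i, 0 ≤ N i := fun i => Real.sInf_nonneg (fun lam hlam => hlam.1.le)
    have hNbig : ∀ i, ∀ t : ℝ, 0 < t → t < N i →
        (μ (cube i)).toReal < ∫ y in cube i, Φ (|f y| / t) ∂μ := by
      intro i t ht htN
      by_contra hcon
      push_neg at hcon
      have hμpos : 0 < (μ (cube i)).toReal :=
        ENNReal.toReal_pos (hpos i).ne' (hfin i).ne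
      have hmem : t ∈ {lam : ℝ | 0 < lam ∧
          (μ (cube i)).toReal⁻¹ * ∫ y in cube i, Φ (|f y| / lam) ∂μ ≤ 1} := by
        refine ⟨ht, ?_⟩
        calc (μ (cube i)).toReal⁻¹ * ∫ y in cube i, Φ (|f y| / t) ∂μ
            ≤ (μ (cube i)).toReal⁻¹ * (μ (cube i)).toReal :=
              mul_le_mul_of_nonneg_left hcon (inv_nonneg.2 hμpos.le)
          _ = 1 := inv_mul_cancel₀ hμpos.ne'
      have hle : N i ≤ t := csInf_le ⟨0, fun lam hlam => hlam.1.le⟩ hmem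
      linarith
    have hmain := orlicz_main p hp Φ hcont hmono hΦnn δ hδ0 hΦδ hKne μ cube
      hcube hpos hfin hnest f hf hfint N hNnn hNbig
    refine le_trans hmain ?_
    apply mul_le_mul_of_nonneg_right _ hRHSnn
    linarith
end
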